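/- arXiv:1407.1597 — 6 statements merged into one kernel-verified Lean document; each statement's English description precedes it below -/
import Mathlib

section
/- Let ν > 0 and n, p ∈ ℕ. Let X and Y be two independent positive random variables on a probability space such that P[X ≥ z] ≍ z^{-ν} (log z)^n as z → ∞ and P[Y ≥ z] ≍ z^{-ν} (log z)^p as z → ∞. Then P[X·Y ≥ z] ≍ z^{-ν} (log z)^{n+p+1} as z → ∞. -/
open MeasureTheory ProbabilityTheory Real

/-- `AsympAtTop f g` : there exist constants `0 < κ₁ ≤ κ₂ < ∞` and `z₀ > 0` such that
`κ₁ f(z) ≤ g(z) ≤ κ₂ f(z)` for all `z ≥ z₀`. -/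
def AsympAtTop (f g : ℝ → ℝ) : Prop :=
  ∃ κ₁ κ₂ z₀ : ℝ, 0 < κ₁ ∧ κ₁ ≤ κ₂ ∧ 0 < z₀ ∧
    ∀ z, z₀ ≤ z → κ₁ * f z ≤ g z ∧ g z ≤ κ₂ * f z

/-!
In logarithmic coordinates `z = exp w` both tails behave like `exp (-ν u) * u ^ k`, and the tail
of `X * Y` is estimated by cutting the range of `X` into blocks `[exp u, exp (u + ρ))` and using
independence on each block.

Upper bound: with blocks of length `1` and `m = ⌊w⌋₊`, `X * Y ≥ exp w` forces `Y ≥ exp w`,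
`X ≥ exp m`, or `X ≥ exp j` and `Y ≥ exp (w - j - 1)` for some `j < m`; each of these `≈ w` terms
is `O(exp (-ν w) * w ^ (n + p))`.

Lower bound: choose `ρ` so large that the tail of `X` loses at least half of its size along a
block of length `ρ`. The `≈ w / ρ` disjoint events `X ∈ [exp u, exp (u + ρ))`,
`Y ≥ exp (w - u)`, with `u` running through `[w / 4, w / 2]`, each have probability
`≳ exp (-ν w) * w ^ (n + p)`.
-/

open Filter Finset Set Topology

lemma ProbabilityTheory.IndepFun.measureReal_inter_preimage_eq_mul {Ω β β' : Type*}
    [MeasurableSpace Ω] [MeasurableSpace β] [MeasurableSpace β'] {μ : Measure Ω} {X : Ω → β}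
    {Y : Ω → β'} (hXY : IndepFun X Y μ) {s : Set β} {t : Set β'} (hs : MeasurableSet s)
    (ht : MeasurableSet t) :
    μ.real (X ⁻¹' s ∩ Y ⁻¹' t) = μ.real (X ⁻¹' s) * μ.real (Y ⁻¹' t) := by
  simp only [measureReal_def, hXY.measure_inter_preimage_eq_mul s t hs ht, ENNReal.toReal_mul]

section Blocks

variable {Ω : Type*} [MeasurableSpace Ω] {μ : Measure Ω} [IsFiniteMeasure μ] {X Y : Ω → ℝ}

lemma measureReal_preimage_Ico_eq_sub (hX : Measurable X) {a b : ℝ} (hab : a ≤ b) :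
    μ.real (X ⁻¹' Ico a b) = μ.real {ω | a ≤ X ω} - μ.real {ω | b ≤ X ω} := by
  rw [← Ici_sdiff_Ici, preimage_sdiff]
  exact measureReal_sdiff (preimage_mono (Ici_subset_Ici.2 hab)) (hX measurableSet_Ici)

theorem sum_block_mul_le_measureReal_exp_le_mul (hX : Measurable X) (hY : Measurable Y)
    (hXY : IndepFun X Y μ) {u : ℕ → ℝ} (hu : Monotone u) (m : ℕ) (w : ℝ) :
    ∑ j ∈ range m, (μ.real {ω | exp (u j) ≤ X ω} - μ.real {ω | exp (u (j + 1)) ≤ X ω}) *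
      μ.real {ω | exp (w - u j) ≤ Y ω} ≤ μ.real {ω | exp w ≤ X ω * Y ω} := by
  set A : ℕ → Set Ω := fun j => X ⁻¹' Ico (exp (u j)) (exp (u (j + 1))) ∩
    Y ⁻¹' Ici (exp (w - u j))
  have hA : ∀ j, μ.real (A j) = (μ.real {ω | exp (u j) ≤ X ω} -
      μ.real {ω | exp (u (j + 1)) ≤ X ω}) * μ.real {ω | exp (w - u j) ≤ Y ω} := fun j => by
    rw [hXY.measureReal_inter_preimage_eq_mul measurableSet_Ico measurableSet_Ici,
      measureReal_preimage_Ico_eq_sub hX (exp_le_exp.2 (hu j.le_succ))]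
    rfl
  have hdisj : PairwiseDisjoint (↑(range m)) A := fun i _ j _ hij =>
    ((((exp_monotone.comp hu).pairwise_disjoint_on_Ico_succ) hij).preimage X).mono
      inter_subset_left inter_subset_left
  have hsub : (⋃ j ∈ range m, A j) ⊆ {ω | exp w ≤ X ω * Y ω} := by
    simp only [iUnion_subset_iff]
    rintro j - ω ⟨⟨hXj, -⟩, hYj⟩
    calc exp w = exp (u j) * exp (w - u j) := by rw [← exp_add, add_sub_cancel]
      _ ≤ X ω * Y ω := mul_le_mul hXj hYj (exp_pos _).le ((exp_pos _).le.trans hXj)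
  simp_rw [← hA]
  rw [← measureReal_biUnion_finset hdisj fun j _ =>
    (hX measurableSet_Ico).inter (hY measurableSet_Ici)]
  exact measureReal_mono hsub

lemma exp_le_or_exists_block_of_exp_le_mul {x y w : ℝ} (hx : 0 < x) (m : ℕ)
    (h : exp w ≤ x * y) :
    exp w ≤ y ∨ exp m ≤ x ∨ ∃ j < m, exp j ≤ x ∧ exp (w - (j + 1)) ≤ y := by
  have hy : exp w / x ≤ y := (div_le_iff₀' hx).2 h
  rcases lt_or_ge x 1 with hx1 | hx1
  · exact Or.inl (le_trans (le_div_self (exp_pos w).le hx hx1.le) hy)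
  rcases le_or_gt (exp m) x with hxm | hxm
  · exact Or.inr (Or.inl hxm)
  refine Or.inr (Or.inr ⟨⌊log x⌋₊, ?_, ?_, ?_⟩)
  · exact_mod_cast (Nat.floor_lt (log_nonneg hx1)).2 ((log_lt_iff_lt_exp hx).2 hxm)
  · exact (exp_le_exp.2 (Nat.floor_le (log_nonneg hx1))).trans_eq (exp_log hx)
  · refine le_trans ?_ hy
    rw [exp_sub]
    gcongr
    exact (exp_log hx).symm.trans_le (exp_le_exp.2 (Nat.lt_floor_add_one _).le)

theorem measureReal_exp_le_mul_le_sum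
    (hXY : IndepFun X Y μ) (hXpos : ∀ᵐ ω ∂μ, 0 < X ω) (m : ℕ) (w : ℝ) :
    μ.real {ω | exp w ≤ X ω * Y ω} ≤ μ.real {ω | exp w ≤ Y ω} + μ.real {ω | exp m ≤ X ω} +
      ∑ j ∈ range m, μ.real {ω | exp j ≤ X ω} * μ.real {ω | exp (w - (j + 1)) ≤ Y ω} := by
  have hcover : ({ω | exp w ≤ X ω * Y ω} : Set Ω) ≤ᵐ[μ]
      (({ω | exp w ≤ Y ω} ∪ {ω | exp m ≤ X ω}) ∪
      ⋃ j ∈ range m, X ⁻¹' Ici (exp j) ∩ Y ⁻¹' Ici (exp (w - (j + 1))) : Set Ω) := by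
    filter_upwards [hXpos] with ω hω hprod
    change ω ∈ (_ : Set Ω)
    simpa [or_assoc, and_left_comm] using exp_le_or_exists_block_of_exp_le_mul hω m hprod
  calc μ.real {ω | exp w ≤ X ω * Y ω}
      ≤ μ.real (({ω | exp w ≤ Y ω} ∪ {ω | exp m ≤ X ω}) ∪
          ⋃ j ∈ range m, X ⁻¹' Ici (exp j) ∩ Y ⁻¹' Ici (exp (w - (j + 1)))) :=
        ENNReal.toReal_mono (measure_ne_top _ _) (measure_mono_ae hcover)
    _ ≤ _ := by
        refine (measureReal_union_le _ _).trans (add_le_add (measureReal_union_le _ _) ?_)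
        refine (measureReal_biUnion_finset_le _ _).trans_eq (sum_congr rfl fun j _ => ?_)
        exact hXY.measureReal_inter_preimage_eq_mul measurableSet_Ici measurableSet_Ici

end Blocks

section LogCoordinates

variable {ν κ₁ κ₂ : ℝ} {n p : ℕ} {f g h : ℝ → ℝ}

lemma exists_shift_le_sub (hν : 0 < ν) (hκ₁ : 0 < κ₁) (hκ : κ₁ ≤ κ₂)
    (hf : ∀ᶠ u in atTop, κ₁ * (exp (-ν * u) * u ^ n) ≤ f u ∧ f u ≤ κ₂ * (exp (-ν * u) * u ^ n)) :
    ∃ ρ ≥ 1, ∀ᶠ u in atTop, κ₁ / 2 * (exp (-ν * u) * u ^ n) ≤ f u - f (u + ρ) := by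
  have hsmall : ∀ᶠ ρ in atTop, κ₂ * 2 ^ n * exp (-ν * ρ) ≤ κ₁ / 2 := by
    have : Tendsto (fun ρ => κ₂ * 2 ^ n * exp (-ν * ρ)) atTop (𝓝 0) := by
      simpa using (tendsto_exp_atBot.comp
        (tendsto_id.const_mul_atTop_of_neg (neg_neg_of_pos hν))).const_mul (κ₂ * 2 ^ n)
    exact this.eventually (ge_mem_nhds (by positivity))
  obtain ⟨ρ, hρ, hρ1⟩ := (hsmall.and (eventually_ge_atTop 1)).exists
  refine ⟨ρ, hρ1, ?_⟩
  filter_upwards [hf, (tendsto_atTop_add_const_right atTop ρ tendsto_id).eventually hf,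
    eventually_ge_atTop ρ] with u hu hshift huρ
  have hκ₂ : 0 ≤ κ₂ := hκ₁.le.trans hκ
  have hu0 : 0 ≤ u := by linarith
  have : f (u + ρ) ≤ κ₁ / 2 * (exp (-ν * u) * u ^ n) :=
    calc f (u + ρ) ≤ κ₂ * (exp (-ν * (u + ρ)) * (u + ρ) ^ n) := hshift.2
      _ ≤ κ₂ * (exp (-ν * u) * exp (-ν * ρ) * (2 * u) ^ n) := by
        rw [← exp_add, mul_add]
        gcongr
        linarith
      _ = κ₂ * 2 ^ n * exp (-ν * ρ) * (exp (-ν * u) * u ^ n) := by ring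
      _ ≤ κ₁ / 2 * (exp (-ν * u) * u ^ n) := by gcongr
  linarith [hu.1]

lemma mul_exp_pow_le_mul {α β a b u v w : ℝ} (hα : 0 ≤ α) (hβ : 0 ≤ β) (hw : 0 ≤ w)
    (hu : w / 4 ≤ u) (hv : w / 4 ≤ v) (huv : u + v = w)
    (ha : α * (exp (-ν * u) * u ^ n) ≤ a) (hb : β * (exp (-ν * v) * v ^ p) ≤ b) :
    α * β / 4 ^ (n + p) * (exp (-ν * w) * w ^ (n + p)) ≤ a * b := by
  have hu0 : 0 ≤ u := by linarith
  have hv0 : 0 ≤ v := by linarith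
  calc α * β / 4 ^ (n + p) * (exp (-ν * w) * w ^ (n + p))
      = (α * (exp (-ν * u) * (w / 4) ^ n)) * (β * (exp (-ν * v) * (w / 4) ^ p)) := by
        rw [← huv, mul_add, exp_add, div_pow, div_pow, pow_add, pow_add]
        ring
    _ ≤ (α * (exp (-ν * u) * u ^ n)) * (β * (exp (-ν * v) * v ^ p)) := by gcongr
    _ ≤ a * b := mul_le_mul ha hb (by positivity) ((by positivity : (0:ℝ) ≤ _).trans ha)

theorem exists_eventually_le_of_sum_blocks_le {l₁ : ℝ} (hν : 0 < ν) (hκ₁ : 0 < κ₁)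
    (hκ : κ₁ ≤ κ₂) (hl₁ : 0 < l₁)
    (hf : ∀ᶠ u in atTop, κ₁ * (exp (-ν * u) * u ^ n) ≤ f u ∧ f u ≤ κ₂ * (exp (-ν * u) * u ^ n))
    (hg : ∀ᶠ u in atTop, l₁ * (exp (-ν * u) * u ^ p) ≤ g u)
    (hh : ∀ u : ℕ → ℝ, Monotone u → ∀ (m : ℕ) (w : ℝ),
      ∑ j ∈ range m, (f (u j) - f (u (j + 1))) * g (w - u j) ≤ h w) :
    ∃ K > 0, ∀ᶠ w in atTop, K * (exp (-ν * w) * w ^ (n + p + 1)) ≤ h w := by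
  obtain ⟨ρ, hρ1, hdec⟩ := exists_shift_le_sub hν hκ₁ hκ hf
  obtain ⟨a, ha⟩ := eventually_atTop.1 (hdec.and hg)
  set c := κ₁ / 2 * l₁ / 4 ^ (n + p)
  refine ⟨c / (8 * ρ), by positivity, ?_⟩
  filter_upwards [eventually_ge_atTop (4 * a), eventually_ge_atTop (8 * ρ)] with w hwa hwρ
  have hw0 : 0 ≤ w := by linarith
  set m := ⌊w / (4 * ρ)⌋₊
  have hm : w / (8 * ρ) ≤ m := by
    have h2 : 2 ≤ w / (4 * ρ) := by rw [le_div_iff₀ (by positivity)]; linarith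
    have := Nat.sub_one_lt_floor (w / (4 * ρ))
    rw [show w / (8 * ρ) = w / (4 * ρ) / 2 by field_simp; ring]
    linarith
  have hmρ : m * ρ ≤ w / 4 := by
    have := Nat.floor_le (by positivity : 0 ≤ w / (4 * ρ))
    rw [le_div_iff₀ (by positivity)] at this
    linarith
  have hterm : ∀ j ∈ range m, c * (exp (-ν * w) * w ^ (n + p)) ≤
      (f (w / 4 + j * ρ) - f (w / 4 + (j + 1 : ℕ) * ρ)) * g (w - (w / 4 + j * ρ)) := by
    intro j hj
    have hjm : (j + 1 : ℝ) ≤ m := by exact_mod_cast mem_range.1 hj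
    have hjρ : (j + 1) * ρ ≤ w / 4 := (mul_le_mul_of_nonneg_right hjm (by linarith)).trans hmρ
    have hj0 : 0 ≤ (j : ℝ) * ρ := by positivity
    rw [show w / 4 + ((j + 1 : ℕ) : ℝ) * ρ = w / 4 + j * ρ + ρ by push_cast; ring]
    exact mul_exp_pow_le_mul (by positivity) hl₁.le hw0 (by linarith) (by linarith)
      (add_sub_cancel _ _) (ha _ (by linarith)).1 (ha _ (by linarith)).2
  have hmono : Monotone fun j : ℕ => w / 4 + j * ρ := fun i j hij => by
    dsimp only
    gcongr
  calc c / (8 * ρ) * (exp (-ν * w) * w ^ (n + p + 1))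
      = w / (8 * ρ) * (c * (exp (-ν * w) * w ^ (n + p))) := by ring
    _ ≤ m * (c * (exp (-ν * w) * w ^ (n + p))) := by gcongr
    _ ≤ ∑ j ∈ range m, (f (w / 4 + j * ρ) - f (w / 4 + (j + 1 : ℕ) * ρ)) *
          g (w - (w / 4 + j * ρ)) := by
        simpa using card_nsmul_le_sum (range m) _ _ hterm
    _ ≤ h w := hh _ hmono m w

lemma exists_le_one_add_pow (hν : 0 ≤ ν) (hκ₂ : 0 ≤ κ₂) (hf1 : ∀ u, f u ≤ 1)
    (hf : ∀ᶠ u in atTop, f u ≤ κ₂ * (exp (-ν * u) * u ^ n)) :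
    ∃ A ≥ 0, ∀ u ≥ 0, f u ≤ A * (exp (-ν * u) * (1 + u) ^ n) := by
  obtain ⟨a, ha⟩ := eventually_atTop.1 hf
  refine ⟨κ₂ + exp (ν * a), by positivity, fun u hu => ?_⟩
  rcases le_total a u with hau | hua
  · calc f u ≤ κ₂ * (exp (-ν * u) * u ^ n) := ha u hau
      _ ≤ (κ₂ + exp (ν * a)) * (exp (-ν * u) * (1 + u) ^ n) := by
        gcongr
        · linarith [exp_pos (ν * a)]
        · linarith
  · calc f u ≤ exp (ν * a) * (exp (-ν * u) * 1) := by
          rw [mul_one, ← exp_add]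
          exact (hf1 u).trans (one_le_exp (by nlinarith))
      _ ≤ (κ₂ + exp (ν * a)) * (exp (-ν * u) * (1 + u) ^ n) := by
        gcongr
        · linarith
        · exact one_le_pow₀ (by linarith)

theorem le_of_le_sum_exp_blocks {A B : ℝ} (hν : 0 ≤ ν) (hA : 0 ≤ A) (hB : 0 ≤ B)
    (hg0 : ∀ u, 0 ≤ g u) (hf : ∀ u ≥ 0, f u ≤ A * (exp (-ν * u) * (1 + u) ^ n))
    (hg : ∀ u ≥ 0, g u ≤ B * (exp (-ν * u) * (1 + u) ^ p))
    (hh : ∀ (m : ℕ) (w : ℝ), h w ≤ g w + f m + ∑ j ∈ range m, f j * g (w - (j + 1)))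
    {w : ℝ} (hw : 0 ≤ w) :
    h w ≤ (B + A * exp ν + A * B * exp ν) * (exp (-ν * w) * (1 + w) ^ (n + p + 1)) := by
  set m := ⌊w⌋₊
  have hmw : (m : ℝ) ≤ w := Nat.floor_le hw
  have hwm : w < m + 1 := Nat.lt_floor_add_one w
  have hpow : ∀ k ≤ n + p + 1, (1 + w) ^ k ≤ (1 + w) ^ (n + p + 1) := fun k hk =>
    pow_le_pow_right₀ (by linarith) hk
  have hgw : g w ≤ B * (exp (-ν * w) * (1 + w) ^ (n + p + 1)) :=
    (hg w hw).trans (by gcongr _ * (_ * ?_); exact hpow p (by omega))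
  have hfm : f m ≤ A * exp ν * (exp (-ν * w) * (1 + w) ^ (n + p + 1)) :=
    calc f m ≤ A * (exp (-ν * m) * (1 + m) ^ n) := hf m m.cast_nonneg
      _ ≤ A * (exp (ν + -ν * w) * (1 + w) ^ (n + p + 1)) := by
        gcongr
        · nlinarith
        · exact (pow_le_pow_left₀ (by positivity) (by linarith) n).trans (hpow n (by omega))
      _ = A * exp ν * (exp (-ν * w) * (1 + w) ^ (n + p + 1)) := by rw [exp_add]; ring
  have hterm : ∀ j ∈ range m,
      f j * g (w - (j + 1)) ≤ A * B * exp ν * (exp (-ν * w) * (1 + w) ^ (n + p)) := by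
    intro j hj
    have hjm : (j + 1 : ℝ) ≤ m := by exact_mod_cast mem_range.1 hj
    calc f j * g (w - (j + 1))
        ≤ (A * (exp (-ν * j) * (1 + j) ^ n)) *
            (B * (exp (-ν * (w - (j + 1))) * (1 + (w - (j + 1))) ^ p)) :=
          mul_le_mul (hf j j.cast_nonneg) (hg _ (by linarith)) (hg0 _) (by positivity)
      _ = A * B * exp ν * (exp (-ν * w) * ((1 + j) ^ n * (w - j) ^ p)) := by
        have hexp : exp ν * exp (-ν * w) = exp (-ν * j) * exp (-ν * (w - (j + 1))) := by
          rw [← exp_add, ← exp_add]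
          ring_nf
        rw [show 1 + (w - (j + 1)) = w - j by ring]
        linear_combination (-(A * B) * ((1 + j) ^ n * (w - j) ^ p)) * hexp
      _ ≤ A * B * exp ν * (exp (-ν * w) * ((1 + w) ^ n * (1 + w) ^ p)) := by
        have hjw : 0 ≤ w - j := by linarith
        gcongr _ * (_ * ?_)
        exact mul_le_mul (pow_le_pow_left₀ (by positivity) (by linarith) n)
          (pow_le_pow_left₀ hjw (by linarith) p) (pow_nonneg hjw p) (by positivity)
      _ = A * B * exp ν * (exp (-ν * w) * (1 + w) ^ (n + p)) := by rw [pow_add]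
  have hsum : ∑ j ∈ range m, f j * g (w - (j + 1)) ≤
      A * B * exp ν * (exp (-ν * w) * (1 + w) ^ (n + p + 1)) :=
    calc ∑ j ∈ range m, f j * g (w - (j + 1))
        ≤ m * (A * B * exp ν * (exp (-ν * w) * (1 + w) ^ (n + p))) := by
          simpa using sum_le_card_nsmul (range m) _ _ hterm
      _ ≤ (1 + w) * (A * B * exp ν * (exp (-ν * w) * (1 + w) ^ (n + p))) := by
          gcongr
          linarith
      _ = A * B * exp ν * (exp (-ν * w) * (1 + w) ^ (n + p + 1)) := by ring
  linarith [hh m w]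

end LogCoordinates

lemma asympAtTop_rpow_neg_mul_log_pow_iff {ν : ℝ} {k : ℕ} {g : ℝ → ℝ} :
    AsympAtTop (fun z => z ^ (-ν) * log z ^ k) g ↔ ∃ κ₁ κ₂, 0 < κ₁ ∧ κ₁ ≤ κ₂ ∧
      ∀ᶠ u in atTop, κ₁ * (exp (-ν * u) * u ^ k) ≤ g (exp u) ∧
        g (exp u) ≤ κ₂ * (exp (-ν * u) * u ^ k) := by
  have hexp : ∀ u, exp u ^ (-ν) * log (exp u) ^ k = exp (-ν * u) * u ^ k := fun u => by
    rw [log_exp, ← exp_mul, mul_comm u]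
  constructor
  · rintro ⟨κ₁, κ₂, z₀, hκ₁, hκ, -, h⟩
    refine ⟨κ₁, κ₂, hκ₁, hκ, ?_⟩
    filter_upwards [tendsto_exp_atTop.eventually (eventually_ge_atTop z₀)] with u hu
    simpa only [hexp] using h _ hu
  · rintro ⟨κ₁, κ₂, hκ₁, hκ, h⟩
    obtain ⟨z₀, hz₀⟩ := eventually_atTop.1 (tendsto_log_atTop.eventually h)
    refine ⟨κ₁, κ₂, max z₀ 1, hκ₁, hκ, by positivity, fun z hz => ?_⟩
    have hz0 : 0 < z := one_pos.trans_le ((le_max_right _ _).trans hz)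
    simpa only [← hexp, exp_log hz0] using hz₀ z ((le_max_left _ _).trans hz)

theorem stmt_0_general {Ω : Type*} [MeasureSpace Ω] [IsProbabilityMeasure (ℙ : Measure Ω)]
    (ν : ℝ) (hν : 0 < ν) (n p : ℕ) (X Y : Ω → ℝ)
    (hXm : Measurable X) (hYm : Measurable Y)
    (hXpos : ∀ᵐ ω ∂ℙ, 0 < X ω)
    (hindep : IndepFun X Y ℙ)
    (htX : AsympAtTop (fun z => z ^ (-ν) * Real.log z ^ n)
      (fun z => (ℙ {ω | z ≤ X ω}).toReal))
    (htY : AsympAtTop (fun z => z ^ (-ν) * Real.log z ^ p)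
      (fun z => (ℙ {ω | z ≤ Y ω}).toReal)) :
    AsympAtTop (fun z => z ^ (-ν) * Real.log z ^ (n + p + 1))
      (fun z => (ℙ {ω | z ≤ X ω * Y ω}).toReal) := by
  obtain ⟨κ₁, κ₂, hκ₁, hκ, hX⟩ := asympAtTop_rpow_neg_mul_log_pow_iff.1 htX
  obtain ⟨l₁, l₂, hl₁, hl, hY⟩ := asympAtTop_rpow_neg_mul_log_pow_iff.1 htY
  obtain ⟨K, hK, hlower⟩ := exists_eventually_le_of_sum_blocks_le hν hκ₁ hκ hl₁ hX
    (hY.mono fun _ h => h.1) fun _ hu m w =>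
      sum_block_mul_le_measureReal_exp_le_mul hXm hYm hindep hu m w
  obtain ⟨A, hA, hXA⟩ := exists_le_one_add_pow hν.le (hκ₁.trans_le hκ).le
    (fun _ => measureReal_le_one) (hX.mono fun _ h => h.2)
  obtain ⟨B, hB, hYB⟩ := exists_le_one_add_pow hν.le (hl₁.trans_le hl).le
    (fun _ => measureReal_le_one) (hY.mono fun _ h => h.2)
  set C := B + A * exp ν + A * B * exp ν
  rw [asympAtTop_rpow_neg_mul_log_pow_iff]
  refine ⟨K, max K (2 ^ (n + p + 1) * C), hK, le_max_left _ _, ?_⟩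
  filter_upwards [hlower, eventually_ge_atTop 1] with w hw hw1
  refine ⟨hw, ?_⟩
  calc _ ≤ C * (exp (-ν * w) * (1 + w) ^ (n + p + 1)) :=
        le_of_le_sum_exp_blocks hν.le hA hB (fun _ => measureReal_nonneg) hXA hYB
          (fun m w => measureReal_exp_le_mul_le_sum hindep hXpos m w) (by linarith)
    _ ≤ C * (exp (-ν * w) * (2 * w) ^ (n + p + 1)) := by gcongr; linarith
    _ = 2 ^ (n + p + 1) * C * (exp (-ν * w) * w ^ (n + p + 1)) := by ring
    _ ≤ max K (2 ^ (n + p + 1) * C) * (exp (-ν * w) * w ^ (n + p + 1)) :=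
        mul_le_mul_of_nonneg_right (le_max_right _ _)
          (mul_nonneg (exp_pos _).le (pow_nonneg (by linarith) _))

theorem stmt_0 {Ω : Type*} [MeasureSpace Ω] [IsProbabilityMeasure (ℙ : Measure Ω)]
    (ν : ℝ) (hν : 0 < ν) (n p : ℕ) (X Y : Ω → ℝ)
    (hXm : Measurable X) (hYm : Measurable Y)
    (hXpos : ∀ᵐ ω ∂ℙ, 0 < X ω) (hYpos : ∀ᵐ ω ∂ℙ, 0 < Y ω)
    (hindep : IndepFun X Y ℙ)
    (htX : AsympAtTop (fun z => z ^ (-ν) * Real.log z ^ n)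
      (fun z => (ℙ {ω | z ≤ X ω}).toReal))
    (htY : AsympAtTop (fun z => z ^ (-ν) * Real.log z ^ p)
      (fun z => (ℙ {ω | z ≤ Y ω}).toReal)) :
    AsympAtTop (fun z => z ^ (-ν) * Real.log z ^ (n + p + 1))
      (fun z => (ℙ {ω | z ≤ X ω * Y ω}).toReal) :=
  stmt_0_general ν hν n p X Y hXm hYm hXpos hindep htX htY
end

section
/- Let μ > ν > 0 and n, p ∈ ℕ. Let X and Y be two independent positive random variables on a probability space such that P[X ≥ z] ≍ z^{-ν} (log z)^n as z → ∞ and P[Y ≥ z] ≍ z^{-μ} (log z)^p as z → ∞. Then P[X·Y ≥ z] ≍ z^{-ν} (log z)^n as z → ∞. -/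
/-!
Lower bound: `P[XY ≥ z] ≥ P[X ≥ z] · P[Y ≥ 1]`, and `P[Y ≥ 1] > 0` because the tail of `Y` is
eventually positive.

Upper bound: fix `ν < a < μ`, so that `P[Y ≥ t] ≤ C t^(-a)` for all `t > 0`, let `w₀` be the
threshold above which `P[X ≥ w] ≤ A w^(-ν) (log w)^n`, and choose `2^N ≤ z / w₀ < 2^(N+1)`.
Where `X ≥ 0` and `XY ≥ z`, either `Y < 1` (then `X ≥ z`), or `Y ≥ 2^N > z / (2 w₀)`, or
`2^k ≤ Y < 2^(k+1)` for some `k < N` (then `X ≥ z / 2^(k+1) ≥ w₀`). By independence the `k`-th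
block contributes at most `A C 2^ν (2^(ν-a))^k z^(-ν) (log z)^n`, a geometric series, and
`P[Y ≥ 2^N] = O(z^(-a)) = O(z^(-ν))`.
-/

open MeasureTheory ProbabilityTheory Real

open Filter Finset

namespace AsympAtTop

variable {f g : ℝ → ℝ}

theorem exists_eventually_ge (h : AsympAtTop f g) : ∃ κ > 0, ∀ᶠ z in atTop, κ * f z ≤ g z := by
  obtain ⟨κ₁, _, z₀, hκ₁, -, -, hb⟩ := h
  exact ⟨κ₁, hκ₁, eventually_atTop.2 ⟨z₀, fun z hz => (hb z hz).1⟩⟩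

theorem exists_eventually_le (h : AsympAtTop f g) : ∃ κ > 0, ∀ᶠ z in atTop, g z ≤ κ * f z := by
  obtain ⟨κ₁, κ₂, z₀, hκ₁, hκ₁₂, -, hb⟩ := h
  exact ⟨κ₂, hκ₁.trans_le hκ₁₂, eventually_atTop.2 ⟨z₀, fun z hz => (hb z hz).2⟩⟩

theorem of_eventually (hf : ∀ᶠ z in atTop, 0 ≤ f z)
    (hlow : ∃ κ > 0, ∀ᶠ z in atTop, κ * f z ≤ g z) (hup : ∃ κ, ∀ᶠ z in atTop, g z ≤ κ * f z) :
    AsympAtTop f g := by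
  obtain ⟨κ₁, hκ₁, hlow⟩ := hlow
  obtain ⟨κ₂, hup⟩ := hup
  obtain ⟨z₀, hz₀⟩ := eventually_atTop.1 (hf.and (hlow.and hup))
  refine ⟨κ₁, max κ₁ κ₂, max z₀ 1, hκ₁, le_max_left _ _, by positivity, fun z hz => ?_⟩
  obtain ⟨hfz, hlowz, hupz⟩ := hz₀ z (le_of_max_le_left hz)
  exact ⟨hlowz, hupz.trans (by gcongr; exact le_max_right _ _)⟩

theorem eventually_pos (h : AsympAtTop f g) (hf : ∀ᶠ z in atTop, 0 < f z) :
    ∀ᶠ z in atTop, 0 < g z := by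
  obtain ⟨κ, hκ, hlow⟩ := h.exists_eventually_ge
  filter_upwards [hf, hlow] with z hfz hlowz
  exact (mul_pos hκ hfz).trans_le hlowz

end AsympAtTop

theorem eventually_rpow_neg_mul_log_pow_pos (μ : ℝ) (p : ℕ) :
    ∀ᶠ z in atTop, 0 < z ^ (-μ) * log z ^ p := by
  filter_upwards [eventually_gt_atTop 1] with z hz
  have := log_pos hz
  positivity

theorem eventually_rpow_neg_mul_log_pow_le {a μ : ℝ} (haμ : a < μ) (p : ℕ) :
    ∀ᶠ z in atTop, z ^ (-μ) * log z ^ p ≤ z ^ (-a) := by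
  have hlog := (isLittleO_log_rpow_rpow_atTop p (sub_pos.2 haμ)).bound one_pos
  filter_upwards [hlog, eventually_gt_atTop 1] with z hz hz1
  have hz0 : 0 < z := one_pos.trans hz1
  rw [norm_of_nonneg (by have := log_pos hz1; positivity), norm_of_nonneg (by positivity),
    one_mul, rpow_natCast] at hz
  calc z ^ (-μ) * log z ^ p ≤ z ^ (-μ) * z ^ (μ - a) := by gcongr
    _ = z ^ (-a) := by rw [← rpow_add hz0]; ring_nf

theorem rpow_neg_le_rpow_neg_mul_log_pow {ν a z : ℝ} (n : ℕ) (hνa : ν ≤ a) (hz : exp 1 ≤ z) :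
    z ^ (-a) ≤ z ^ (-ν) * log z ^ n := by
  have hz1 : 1 ≤ z := (one_le_exp zero_le_one).trans hz
  have hlog : 1 ≤ log z := by rwa [le_log_iff_exp_le (one_pos.trans_le hz1)]
  calc z ^ (-a) ≤ z ^ (-ν) := rpow_le_rpow_of_exponent_le hz1 (neg_le_neg hνa)
    _ ≤ z ^ (-ν) * log z ^ n :=
      le_mul_of_one_le_right (by positivity) (one_le_pow₀ hlog)

theorem rpow_neg_mul_log_pow_div_le {z c : ℝ} (ν : ℝ) (n : ℕ) (hc : 1 ≤ c) (hzc : 1 ≤ z / c) :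
    (z / c) ^ (-ν) * log (z / c) ^ n ≤ c ^ ν * (z ^ (-ν) * log z ^ n) := by
  have hc0 : 0 < c := one_pos.trans_le hc
  have hz0 : 0 < z := by rw [le_div_iff₀ hc0] at hzc; linarith
  rw [div_rpow hz0.le hc0.le, rpow_neg hc0.le, div_inv_eq_mul, mul_comm (z ^ (-ν)), mul_assoc]
  gcongr
  · exact log_nonneg hzc
  · exact div_le_self hz0.le hc

theorem exists_forall_le_mul_rpow_neg {F : ℝ → ℝ} {a C : ℝ} (ha : 0 ≤ a) (hF : ∀ t, F t ≤ 1)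
    (h : ∀ᶠ t in atTop, F t ≤ C * t ^ (-a)) : ∃ C' ≥ 0, ∀ t, 0 < t → F t ≤ C' * t ^ (-a) := by
  obtain ⟨T, hT⟩ := eventually_atTop.1 h
  set M := max T 1
  have hM : 0 < M := one_pos.trans_le (le_max_right _ _)
  refine ⟨max C (M ^ a), le_max_of_le_right (by positivity), fun t ht => ?_⟩
  rcases le_or_gt M t with hMt | htM
  · calc F t ≤ C * t ^ (-a) := hT t ((le_max_left _ _).trans hMt)
      _ ≤ max C (M ^ a) * t ^ (-a) := by gcongr; exact le_max_left _ _
  · calc F t ≤ 1 := hF t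
      _ = M ^ a * M ^ (-a) := by rw [← rpow_add hM]; simp
      _ ≤ max C (M ^ a) * t ^ (-a) :=
        mul_le_mul (le_max_right _ _) (rpow_le_rpow_of_nonpos ht htM.le (neg_nonpos.2 ha))
          (by positivity) (le_max_of_le_right (by positivity))

theorem AsympAtTop.exists_le_mul_rpow_neg {F : ℝ → ℝ} {a μ : ℝ} {p : ℕ} (ha : 0 ≤ a)
    (haμ : a < μ) (hF : ∀ t, F t ≤ 1) (h : AsympAtTop (fun z => z ^ (-μ) * log z ^ p) F) :
    ∃ C ≥ 0, ∀ t, 0 < t → F t ≤ C * t ^ (-a) := by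
  obtain ⟨κ, hκ, hup⟩ := h.exists_eventually_le
  refine exists_forall_le_mul_rpow_neg (C := κ) ha hF ?_
  filter_upwards [hup, eventually_rpow_neg_mul_log_pow_le haμ p] with t ht hbound
  exact ht.trans (by gcongr)

theorem two_pow_succ_rpow_mul_two_pow_rpow_neg (ν a : ℝ) (k : ℕ) :
    ((2 : ℝ) ^ (k + 1)) ^ ν * ((2 : ℝ) ^ k) ^ (-a) = 2 ^ ν * (2 ^ (ν - a)) ^ k := by
  rw [← rpow_pow_comm zero_le_two, ← rpow_pow_comm zero_le_two, rpow_sub two_pos,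
    rpow_neg zero_le_two, pow_succ, div_eq_mul_inv, mul_pow]
  ring

theorem sum_dyadic_le {F G : ℝ → ℝ} {ν a A C w₀ z : ℝ} {n N : ℕ} (hνa : ν < a) (hA : 0 ≤ A)
    (hC : 0 ≤ C) (hw₀ : 1 ≤ w₀) (hN : 2 ^ N * w₀ ≤ z) (hG₀ : ∀ t, 0 ≤ G t)
    (hF : ∀ w, w₀ ≤ w → F w ≤ A * (w ^ (-ν) * log w ^ n))
    (hG : ∀ t, 0 < t → G t ≤ C * t ^ (-a)) :
    ∑ k ∈ range N, F (z / 2 ^ (k + 1)) * G (2 ^ k) ≤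
      A * C * 2 ^ ν / (1 - 2 ^ (ν - a)) * (z ^ (-ν) * log z ^ n) := by
  set q : ℝ := 2 ^ (ν - a)
  have hq : q < 1 := rpow_lt_one_of_one_lt_of_neg one_lt_two (by linarith)
  have hz : 1 ≤ z := by nlinarith [one_le_pow₀ (M₀ := ℝ) one_le_two (n := N)]
  have hterm : ∀ k ∈ range N, F (z / 2 ^ (k + 1)) * G (2 ^ k) ≤
      A * C * 2 ^ ν * (z ^ (-ν) * log z ^ n) * q ^ k := by
    intro k hk
    have hkN : 2 ^ (k + 1) ≤ (2 : ℝ) ^ N :=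
      pow_le_pow_right₀ one_le_two (Nat.succ_le_of_lt (mem_range.1 hk))
    have hw : w₀ ≤ z / 2 ^ (k + 1) := by
      rw [le_div_iff₀ (by positivity)]; nlinarith
    calc F (z / 2 ^ (k + 1)) * G (2 ^ k)
        ≤ (A * ((2 ^ (k + 1)) ^ ν * (z ^ (-ν) * log z ^ n))) * (C * ((2 : ℝ) ^ k) ^ (-a)) := by
          have hFw := (hF _ hw).trans (mul_le_mul_of_nonneg_left
            (rpow_neg_mul_log_pow_div_le ν n (one_le_pow₀ one_le_two) (hw₀.trans hw)) hA)
          exact mul_le_mul hFw (hG _ (by positivity)) (hG₀ _)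
            (by have := log_nonneg hz; positivity)
      _ = A * C * 2 ^ ν * (z ^ (-ν) * log z ^ n) * q ^ k := by
          linear_combination (A * C * (z ^ (-ν) * log z ^ n)) *
            two_pow_succ_rpow_mul_two_pow_rpow_neg ν a k
  have hgeom : ∑ k ∈ range N, q ^ k ≤ 1 / (1 - q) := by
    have := geom_sum_Ico_le_of_lt_one (m := 0) (n := N) (by positivity) hq
    rwa [← range_eq_Ico, pow_zero] at this
  calc _ ≤ ∑ k ∈ range N, A * C * 2 ^ ν * (z ^ (-ν) * log z ^ n) * q ^ k := sum_le_sum hterm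
    _ = A * C * 2 ^ ν * (z ^ (-ν) * log z ^ n) * ∑ k ∈ range N, q ^ k := by rw [mul_sum]
    _ ≤ A * C * 2 ^ ν * (z ^ (-ν) * log z ^ n) * (1 / (1 - q)) := by
        have := log_nonneg hz
        gcongr
    _ = _ := by ring

theorem le_or_two_pow_le_or_exists_dyadic {x y z : ℝ} (hx : 0 ≤ x) (h : z ≤ x * y) (N : ℕ) :
    z ≤ x ∨ 2 ^ N ≤ y ∨ ∃ k < N, z / 2 ^ (k + 1) ≤ x ∧ 2 ^ k ≤ y := by
  rcases lt_or_ge y 1 with hy | hy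
  · exact Or.inl (by nlinarith)
  rcases le_or_gt (2 ^ N) y with hNy | hyN
  · exact Or.inr (Or.inl hNy)
  obtain ⟨k, hky, hyk⟩ := exists_nat_pow_near hy one_lt_two
  refine Or.inr (Or.inr ⟨k, (pow_lt_pow_iff_right₀ one_lt_two).1 (hky.trans_lt hyN), ?_, hky⟩)
  rw [div_le_iff₀ (by positivity)]
  nlinarith

namespace ProbabilityTheory.IndepFun

variable {Ω : Type*} [MeasurableSpace Ω] {P : Measure Ω} {X Y : Ω → ℝ}

theorem measureReal_inter_setOf_le (hXY : IndepFun X Y P) (a b : ℝ) :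
    P.real ({ω | a ≤ X ω} ∩ {ω | b ≤ Y ω}) = P.real {ω | a ≤ X ω} * P.real {ω | b ≤ Y ω} := by
  simp only [measureReal_def, ← ENNReal.toReal_mul]
  congr 1
  exact hXY.measure_inter_preimage_eq_mul (Set.Ici a) (Set.Ici b) measurableSet_Ici
    measurableSet_Ici

theorem mul_measureReal_one_le_le [IsFiniteMeasure P] (hXY : IndepFun X Y P) {z : ℝ}
    (hz : 0 ≤ z) :
    P.real {ω | z ≤ X ω} * P.real {ω | 1 ≤ Y ω} ≤ P.real {ω | z ≤ X ω * Y ω} := by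
  rw [← hXY.measureReal_inter_setOf_le]
  refine measureReal_mono fun ω ⟨hXω, hYω⟩ => ?_
  simp only [Set.mem_ofPred_eq] at hXω hYω ⊢
  nlinarith

theorem measureReal_le_mul_le_dyadic [IsFiniteMeasure P] (hXY : IndepFun X Y P)
    (hX : ∀ᵐ ω ∂P, 0 ≤ X ω) (z : ℝ) (N : ℕ) :
    P.real {ω | z ≤ X ω * Y ω} ≤ P.real {ω | z ≤ X ω} + P.real {ω | 2 ^ N ≤ Y ω} +
      ∑ k ∈ range N, P.real {ω | z / 2 ^ (k + 1) ≤ X ω} * P.real {ω | 2 ^ k ≤ Y ω} := by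
  have hcover : {ω | z ≤ X ω * Y ω} ≤ᵐ[P] ({ω | z ≤ X ω} ∪ {ω | 2 ^ N ≤ Y ω} ∪
      ⋃ k ∈ range N, {ω | z / 2 ^ (k + 1) ≤ X ω} ∩ {ω | 2 ^ k ≤ Y ω} : Set Ω) := by
    filter_upwards [hX] with ω hXω hω
    show ω ∈ (_ : Set Ω)
    simpa [or_assoc, and_left_comm] using le_or_two_pow_le_or_exists_dyadic hXω hω N
  calc P.real {ω | z ≤ X ω * Y ω}
      ≤ P.real ({ω | z ≤ X ω} ∪ {ω | 2 ^ N ≤ Y ω} ∪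
          ⋃ k ∈ range N, {ω | z / 2 ^ (k + 1) ≤ X ω} ∩ {ω | 2 ^ k ≤ Y ω}) :=
        ENNReal.toReal_mono (measure_ne_top _ _) (measure_mono_ae hcover)
    _ ≤ P.real {ω | z ≤ X ω} + P.real {ω | 2 ^ N ≤ Y ω} +
          ∑ k ∈ range N, P.real ({ω | z / 2 ^ (k + 1) ≤ X ω} ∩ {ω | 2 ^ k ≤ Y ω}) :=
        (measureReal_union_le _ _).trans
          (add_le_add (measureReal_union_le _ _) (measureReal_biUnion_finset_le _ _))
    _ = _ := by simp only [hXY.measureReal_inter_setOf_le]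

theorem measureReal_le_mul_le_of_tail_le [IsFiniteMeasure P] (hXY : IndepFun X Y P)
    (hX : ∀ᵐ ω ∂P, 0 ≤ X ω) {ν a A C w₀ z : ℝ} {n : ℕ} (hνa : ν < a) (ha : 0 ≤ a) (hA : 0 ≤ A)
    (hC : 0 ≤ C) (hw₀ : 1 ≤ w₀)
    (hXtail : ∀ w, w₀ ≤ w → P.real {ω | w ≤ X ω} ≤ A * (w ^ (-ν) * log w ^ n))
    (hYtail : ∀ t, 0 < t → P.real {ω | t ≤ Y ω} ≤ C * t ^ (-a)) (hz : max w₀ (exp 1) ≤ z) :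
    P.real {ω | z ≤ X ω * Y ω} ≤
      (A + C * (2 * w₀) ^ a + A * C * 2 ^ ν / (1 - 2 ^ (ν - a))) * (z ^ (-ν) * log z ^ n) := by
  have hw₀z : w₀ ≤ z := le_of_max_le_left hz
  have hw₀pos : 0 < w₀ := one_pos.trans_le hw₀
  obtain ⟨N, hN, hN'⟩ := exists_nat_pow_near ((one_le_div hw₀pos).2 hw₀z) one_lt_two
  rw [le_div_iff₀ hw₀pos] at hN
  rw [div_lt_iff₀ hw₀pos, pow_succ] at hN'
  have hYbig : P.real {ω | 2 ^ N ≤ Y ω} ≤ C * (2 * w₀) ^ a * (z ^ (-ν) * log z ^ n) := by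
    have hz0 : 0 < z := hw₀pos.trans_le hw₀z
    have hzN : z / (2 * w₀) ≤ 2 ^ N := by
      rw [div_le_iff₀ (by positivity)]; linarith
    calc P.real {ω | 2 ^ N ≤ Y ω} ≤ C * ((2 : ℝ) ^ N) ^ (-a) := hYtail _ (by positivity)
      _ ≤ C * (z / (2 * w₀)) ^ (-a) :=
        mul_le_mul_of_nonneg_left
          (rpow_le_rpow_of_nonpos (by positivity) hzN (neg_nonpos.2 ha)) hC
      _ = C * (2 * w₀) ^ a * z ^ (-a) := by
        rw [div_rpow hz0.le (by positivity), rpow_neg (x := 2 * w₀) (by positivity),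
          div_inv_eq_mul]
        ring
      _ ≤ C * (2 * w₀) ^ a * (z ^ (-ν) * log z ^ n) := by
        gcongr; exact rpow_neg_le_rpow_neg_mul_log_pow n hνa.le (le_of_max_le_right hz)
  have hdyadic := sum_dyadic_le (F := fun w => P.real {ω | w ≤ X ω})
    (G := fun t => P.real {ω | t ≤ Y ω}) hνa hA hC hw₀ hN (fun _ => measureReal_nonneg)
    hXtail hYtail
  calc P.real {ω | z ≤ X ω * Y ω}
      ≤ P.real {ω | z ≤ X ω} + P.real {ω | 2 ^ N ≤ Y ω} +
          ∑ k ∈ range N, P.real {ω | z / 2 ^ (k + 1) ≤ X ω} * P.real {ω | 2 ^ k ≤ Y ω} :=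
        hXY.measureReal_le_mul_le_dyadic hX z N
    _ ≤ A * (z ^ (-ν) * log z ^ n) + C * (2 * w₀) ^ a * (z ^ (-ν) * log z ^ n) +
          A * C * 2 ^ ν / (1 - 2 ^ (ν - a)) * (z ^ (-ν) * log z ^ n) :=
        add_le_add (add_le_add (hXtail z hw₀z) hYbig) hdyadic
    _ = _ := by ring

end ProbabilityTheory.IndepFun

theorem stmt_1_general {Ω : Type*} [MeasureSpace Ω] [IsProbabilityMeasure (ℙ : Measure Ω)]
    (μ ν : ℝ) (hν : 0 < ν) (hμν : ν < μ) (n p : ℕ) (X Y : Ω → ℝ)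
    (hXpos : ∀ᵐ ω ∂ℙ, 0 < X ω)
    (hindep : IndepFun X Y ℙ)
    (htX : AsympAtTop (fun z => z ^ (-ν) * Real.log z ^ n)
      (fun z => (ℙ {ω | z ≤ X ω}).toReal))
    (htY : AsympAtTop (fun z => z ^ (-μ) * Real.log z ^ p)
      (fun z => (ℙ {ω | z ≤ Y ω}).toReal)) :
    AsympAtTop (fun z => z ^ (-ν) * Real.log z ^ n)
      (fun z => (ℙ {ω | z ≤ X ω * Y ω}).toReal) := by
  obtain ⟨a, hνa, haμ⟩ := exists_between hμν
  obtain ⟨C, hC, hYtail⟩ := htY.exists_le_mul_rpow_neg (hν.trans hνa).le haμ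
    fun _ => measureReal_le_one
  obtain ⟨z₁, hz₁, hYz₁⟩ := ((htY.eventually_pos (eventually_rpow_neg_mul_log_pow_pos μ p)).and
    (eventually_ge_atTop 1)).exists
  have hY1 : 0 < (ℙ : Measure Ω).real {ω | 1 ≤ Y ω} :=
    hz₁.trans_le (measureReal_mono fun ω hω => hYz₁.trans hω)
  obtain ⟨A, hA, hXup⟩ := htX.exists_eventually_le
  obtain ⟨w₀, hw₀⟩ := eventually_atTop.1 hXup
  refine .of_eventually ((eventually_rpow_neg_mul_log_pow_pos ν n).mono fun _ h => h.le) ?_ ?_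
  · obtain ⟨κ, hκ, hXlow⟩ := htX.exists_eventually_ge
    refine ⟨κ * (ℙ : Measure Ω).real {ω | 1 ≤ Y ω}, mul_pos hκ hY1, ?_⟩
    filter_upwards [hXlow, eventually_ge_atTop 0] with z hz hz0
    calc _ = κ * (z ^ (-ν) * log z ^ n) * (ℙ : Measure Ω).real {ω | 1 ≤ Y ω} := by ring
      _ ≤ _ := by gcongr; exact hz
      _ ≤ _ := hindep.mul_measureReal_one_le_le hz0
  · exact ⟨_, eventually_atTop.2 ⟨max (max w₀ 1) (exp 1), fun z hz =>
      hindep.measureReal_le_mul_le_of_tail_le (hXpos.mono fun _ h => h.le)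
        hνa (hν.trans hνa).le hA.le hC (le_max_right _ _)
        (fun w hw => hw₀ w (le_of_max_le_left hw)) hYtail hz⟩⟩

theorem stmt_1 {Ω : Type*} [MeasureSpace Ω] [IsProbabilityMeasure (ℙ : Measure Ω)]
    (μ ν : ℝ) (hν : 0 < ν) (hμν : ν < μ) (n p : ℕ) (X Y : Ω → ℝ)
    (hXm : Measurable X) (hYm : Measurable Y)
    (hXpos : ∀ᵐ ω ∂ℙ, 0 < X ω) (hYpos : ∀ᵐ ω ∂ℙ, 0 < Y ω)
    (hindep : IndepFun X Y ℙ)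
    (htX : AsympAtTop (fun z => z ^ (-ν) * Real.log z ^ n)
      (fun z => (ℙ {ω | z ≤ X ω}).toReal))
    (htY : AsympAtTop (fun z => z ^ (-μ) * Real.log z ^ p)
      (fun z => (ℙ {ω | z ≤ Y ω}).toReal)) :
    AsympAtTop (fun z => z ^ (-ν) * Real.log z ^ n)
      (fun z => (ℙ {ω | z ≤ X ω * Y ω}).toReal) :=
  stmt_1_general μ ν hν hμν n p X Y hXpos hindep htX htY
end

section
/- Let γ ∈ (0, 1/2) and let ℓ be a positive random variable such that there is an open interval I containing 1 with E[ℓ^{s-1}] finite and equal to sin(πγs)/sin(π(1-γ)s) for every s ∈ I. Then E[|log ℓ|] < ∞ and E[log ℓ] = π cot(πγ) > 0. -/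
open MeasureTheory ProbabilityTheory Real

/-!
`E[log ℓ]` is the derivative at `s = 1` of the Mellin transform `s ↦ E[ℓ ^ (s - 1)]`.
Differentiation under the expectation is legitimate because
`|log x| x ^ s ≤ (x ^ (t + 2ε) + x ^ (t - 2ε)) / ε` for `|s - t| ≤ ε`, and the right side is
integrable once the Mellin transform is finite near `t`. On the other hand the derivative of
`sin (πγ s) / sin (π(1 - γ) s)` at `s = 1` is `π cot (πγ)`, since
`sin (π(1 - γ)) = sin (πγ)` and `cos (π(1 - γ)) = -cos (πγ)`.
-/

namespace Real

lemma abs_log_mul_rpow_le {x : ℝ} (hx : 0 < x) {ε s t : ℝ} (hε : 0 < ε)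
    (hst : |s - t| ≤ ε) :
    |log x * x ^ s| ≤ (x ^ (t + 2 * ε) + x ^ (t - 2 * ε)) / ε := by
  have hs := abs_le.1 hst
  rw [abs_mul, abs_of_nonneg (rpow_pos_of_pos hx s).le]
  rcases le_total 1 x with h1 | h1
  · have hlog : |log x| ≤ x ^ ε / ε := by
      rw [abs_of_nonneg (log_nonneg h1)]
      exact log_le_rpow_div hx.le hε
    have hpow : x ^ s ≤ x ^ (t + ε) := rpow_le_rpow_of_exponent_le h1 (by linarith)
    calc |log x| * x ^ s ≤ x ^ ε / ε * x ^ (t + ε) := by gcongr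
      _ = x ^ (t + 2 * ε) / ε := by rw [div_mul_eq_mul_div, ← rpow_add hx]; ring_nf
      _ ≤ _ := by gcongr; exact le_add_of_nonneg_right (rpow_pos_of_pos hx _).le
  · have hlog : |log x| ≤ x ^ (-ε) / ε := by
      rw [abs_of_nonpos (log_nonpos hx.le h1), ← log_inv, rpow_neg hx.le, ← inv_rpow hx.le]
      exact log_le_rpow_div (inv_nonneg.2 hx.le) hε
    have hpow : x ^ s ≤ x ^ (t - ε) := rpow_le_rpow_of_exponent_ge hx h1 (by linarith)
    calc |log x| * x ^ s ≤ x ^ (-ε) / ε * x ^ (t - ε) := by gcongr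
      _ = x ^ (t - 2 * ε) / ε := by rw [div_mul_eq_mul_div, ← rpow_add hx]; ring_nf
      _ ≤ _ := by gcongr; exact le_add_of_nonneg_left (rpow_pos_of_pos hx _).le

lemma cot_pos_of_mem_Ioo {x : ℝ} (hx : x ∈ Set.Ioo 0 (π / 2)) : 0 < cot x := by
  have hsin : 0 < sin x := sin_pos_of_pos_of_lt_pi hx.1 (by linarith [hx.2, pi_pos])
  have hcos : 0 < cos x := cos_pos_of_mem_Ioo ⟨by linarith [hx.1, pi_pos], hx.2⟩
  rw [cot_eq_cos_div_sin]
  positivity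

lemma hasDerivAt_sin_mul_div_sin_one_sub_mul {γ : ℝ} (hγ : sin (π * γ) ≠ 0) :
    HasDerivAt (fun s => sin (π * γ * s) / sin (π * (1 - γ) * s)) (π * cot (π * γ)) 1 := by
  have hsin : sin (π * (1 - γ)) = sin (π * γ) := by rw [mul_one_sub, sin_pi_sub]
  have hcos : cos (π * (1 - γ)) = -cos (π * γ) := by rw [mul_one_sub, cos_pi_sub]
  have hnum := ((hasDerivAt_id (1 : ℝ)).const_mul (π * γ)).sin
  have hden := ((hasDerivAt_id (1 : ℝ)).const_mul (π * (1 - γ))).sin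
  simp only [id, mul_one] at hnum hden
  refine (hnum.div hden (by rwa [mul_one, hsin])).congr_deriv ?_
  rw [mul_one, hsin, hcos, cot_eq_cos_div_sin]
  field_simp
  ring

end Real

theorem hasDerivAt_integral_rpow {Ω : Type*} [MeasurableSpace Ω] {μ : Measure Ω}
    {f : Ω → ℝ} (hf : AEMeasurable f μ) (hpos : ∀ᵐ ω ∂μ, 0 < f ω) {U : Set ℝ} {t : ℝ}
    (hU : U ∈ nhds t)
    (hint : ∀ s ∈ U, Integrable (fun ω => f ω ^ s) μ) :
    Integrable (fun ω => log (f ω) * f ω ^ t) μ ∧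
      HasDerivAt (fun s => ∫ ω, f ω ^ s ∂μ) (∫ ω, log (f ω) * f ω ^ t ∂μ) t := by
  obtain ⟨r, hr, hball⟩ := Metric.mem_nhds_iff.1 hU
  set ε := r / 3 with hε_def
  have hε : 0 < ε := by positivity
  have hmem : ∀ s, |s - t| < r → s ∈ U := fun s hs =>
    hball (by rwa [Metric.mem_ball, dist_eq])
  have hdom : Integrable (fun ω => (f ω ^ (t + 2 * ε) + f ω ^ (t - 2 * ε)) / ε) μ :=
    ((hint _ (hmem _ (by rw [abs_lt]; constructor <;> linarith [hε_def]))).add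
      (hint _ (hmem _ (by rw [abs_lt]; constructor <;> linarith [hε_def])))).div_const _
  refine hasDerivAt_integral_of_dominated_loc_of_deriv_le
    (F' := fun s ω => log (f ω) * f ω ^ s) (Metric.ball_mem_nhds t hε)
    (Filter.Eventually.of_forall fun s => (hf.pow_const s).aestronglyMeasurable)
    (hint t (mem_of_mem_nhds hU))
    (by fun_prop : AEMeasurable (fun ω => log (f ω) * f ω ^ t) μ).aestronglyMeasurable
    ?_ hdom ?_
  · filter_upwards [hpos] with ω hω s hs
    rw [Metric.mem_ball, dist_eq] at hs
    exact abs_log_mul_rpow_le hω hε hs.le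
  · filter_upwards [hpos] with ω hω s _
    simpa only [mul_comm] using (hasStrictDerivAt_const_rpow hω s).hasDerivAt

theorem stmt_4 {Ω : Type*} [MeasureSpace Ω] [IsProbabilityMeasure (ℙ : Measure Ω)]
    (γ : ℝ) (hγ : γ ∈ Set.Ioo (0 : ℝ) (1 / 2))
    (ℓ : Ω → ℝ) (hmeas : Measurable ℓ) (hpos : ∀ᵐ ω ∂ℙ, 0 < ℓ ω)
    (a b : ℝ) (ha : a < 1) (hb : 1 < b)
    (hmellin : ∀ s ∈ Set.Ioo a b,
      Integrable (fun ω => ℓ ω ^ (s - 1)) ℙ ∧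
      ∫ ω, ℓ ω ^ (s - 1) ∂ℙ = Real.sin (π * γ * s) / Real.sin (π * (1 - γ) * s)) :
    Integrable (fun ω => |Real.log (ℓ ω)|) ℙ ∧
    ∫ ω, Real.log (ℓ ω) ∂ℙ = π * Real.cot (π * γ) ∧
    0 < π * Real.cot (π * γ) := by
  have hπγ : π * γ ∈ Set.Ioo 0 (π / 2) :=
    ⟨mul_pos pi_pos hγ.1, by nlinarith [pi_pos, hγ.2]⟩
  have hint : ∀ s ∈ Set.Ioo (a - 1) (b - 1), Integrable (fun ω => ℓ ω ^ s) ℙ := fun s hs => by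
    simpa using (hmellin (s + 1) ⟨by linarith [hs.1], by linarith [hs.2]⟩).1
  obtain ⟨hlog, hderiv⟩ := hasDerivAt_integral_rpow hmeas.aemeasurable hpos
    (Ioo_mem_nhds (by linarith) (by linarith) : Set.Ioo (a - 1) (b - 1) ∈ nhds 0) hint
  simp only [rpow_zero, mul_one] at hlog hderiv
  have hmellin_deriv : HasDerivAt (fun s : ℝ => ∫ ω, ℓ ω ^ (s - 1) ∂ℙ) (∫ ω, log (ℓ ω) ∂ℙ) 1 :=
    HasDerivAt.comp_sub_const (1 : ℝ) 1 (by rwa [sub_self])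
  have heq : (fun s => sin (π * γ * s) / sin (π * (1 - γ) * s)) =ᶠ[nhds 1]
      fun s => ∫ ω, ℓ ω ^ (s - 1) ∂ℙ := by
    filter_upwards [Ioo_mem_nhds ha hb] with s hs using (hmellin s hs).2.symm
  have hsin : sin (π * γ) ≠ 0 :=
    (sin_pos_of_pos_of_lt_pi hπγ.1 (by linarith [hπγ.2, pi_pos])).ne'
  exact ⟨hlog.abs, (hmellin_deriv.congr_of_eventuallyEq heq).unique
    (hasDerivAt_sin_mul_div_sin_one_sub_mul hsin), mul_pos pi_pos (cot_pos_of_mem_Ioo hπγ)⟩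
end

section
/- Let θ ∈ (-π/2, π/2), β > 0 and φ ∈ ℝ. Then the function x ↦ x^{β-1} e^{-x cos θ} cos(x sin θ + φ) is Lebesgue integrable on (0, ∞) and ∫₀^∞ x^{β-1} e^{-x cos θ} cos(x sin θ + φ) dx = Γ(β) cos(βθ + φ). -/
/-!
With `z = exp (iθ)`, the integrand is the real part of `exp (-iφ) t ^ (β - 1) exp (-z t)`, and
`Re z = cos θ > 0`. For `Re a > 0` the Laplace transform `∫₀^∞ t ^ (a - 1) exp (-z t) dt` is
holomorphic on the half-plane `Re z > 0` (differentiate under the integral sign) and equals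
`Γ(a) / z ^ a` for real `z > 0` by scaling, hence on the whole half-plane by the identity theorem.
Finally `z ^ β = exp (iβθ)` because `θ ∈ (-π, π]`.
-/

open MeasureTheory Real

theorem integrableOn_rpow_mul_exp_neg_mul {s b : ℝ} (hs : -1 < s) (hb : 0 < b) :
    IntegrableOn (fun x : ℝ => x ^ s * Real.exp (-(b * x))) (Set.Ioi 0) := by
  simpa using integrableOn_rpow_mul_exp_neg_mul_rpow hs one_pos hb

section LaplaceCpow

open Complex

lemma norm_cpow_mul_cexp_neg_mul (a z : ℂ) {t : ℝ} (ht : 0 < t) :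
    ‖(t : ℂ) ^ (a - 1) * cexp (-(z * t))‖ = t ^ (a.re - 1) * Real.exp (-(z.re * t)) := by
  simp [norm_cpow_eq_rpow_re_of_pos ht, Complex.norm_exp]

lemma continuousOn_cpow_mul_cexp_neg_mul (a z : ℂ) :
    ContinuousOn (fun t : ℝ => (t : ℂ) ^ (a - 1) * cexp (-(z * t))) (Set.Ioi 0) := by
  refine ContinuousOn.mul (fun t ht => ?_) (by fun_prop)
  exact ((continuousAt_cpow_const (ofReal_mem_slitPlane.2 ht)).comp
    continuous_ofReal.continuousAt).continuousWithinAt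

lemma integrableOn_cpow_mul_cexp_neg_mul {a z : ℂ} (ha : 0 < a.re) (hz : 0 < z.re) :
    IntegrableOn (fun t : ℝ => (t : ℂ) ^ (a - 1) * cexp (-(z * t))) (Set.Ioi 0) := by
  refine ⟨(continuousOn_cpow_mul_cexp_neg_mul a z).aestronglyMeasurable measurableSet_Ioi, ?_⟩
  refine (integrableOn_rpow_mul_exp_neg_mul (s := a.re - 1) (by linarith) hz).hasFiniteIntegral
    |>.congr' ?_
  filter_upwards [self_mem_ae_restrict measurableSet_Ioi] with t ht
  rw [norm_cpow_mul_cexp_neg_mul a z ht, Real.norm_of_nonneg (by have := ht.out; positivity)]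

lemma hasDerivAt_cpow_mul_cexp_neg_mul (a z : ℂ) {t : ℝ} (ht : 0 < t) :
    HasDerivAt (fun z : ℂ => (t : ℂ) ^ (a - 1) * cexp (-(z * t)))
      (-((t : ℂ) ^ (a + 1 - 1) * cexp (-(z * t)))) z := by
  have ht' : (t : ℂ) ≠ 0 := ofReal_ne_zero.2 ht.ne'
  refine ((hasDerivAt_mul_const (t : ℂ)).neg.cexp.const_mul ((t : ℂ) ^ (a - 1))).congr_deriv ?_
  rw [add_sub_right_comm, cpow_add _ _ ht', cpow_one, Pi.neg_apply]
  ring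

lemma differentiableOn_integral_cpow_mul_cexp_neg_mul {a : ℂ} (ha : 0 < a.re) :
    DifferentiableOn ℂ
      (fun z : ℂ => ∫ t in Set.Ioi (0 : ℝ), (t : ℂ) ^ (a - 1) * cexp (-(z * t)))
      {z | 0 < z.re} := by
  intro z₀ hz₀
  set ε := z₀.re / 2
  have hε : 0 < ε := half_pos hz₀
  have hnhds : {z : ℂ | ε < z.re} ∈ nhds z₀ :=
    (isOpen_lt continuous_const continuous_re).mem_nhds (half_lt_self hz₀ : ε < z₀.re)
  refine (hasDerivAt_integral_of_dominated_loc_of_deriv_le hnhds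
    (F' := fun z t => -((t : ℂ) ^ (a + 1 - 1) * cexp (-(z * t))))
    (bound := fun t => t ^ ((a + 1).re - 1) * Real.exp (-(ε * t)))
    (Filter.Eventually.of_forall fun z =>
      (continuousOn_cpow_mul_cexp_neg_mul a z).aestronglyMeasurable measurableSet_Ioi)
    (integrableOn_cpow_mul_cexp_neg_mul ha hz₀)
    ((continuousOn_cpow_mul_cexp_neg_mul (a + 1) z₀).neg.aestronglyMeasurable measurableSet_Ioi)
    ?_ (integrableOn_rpow_mul_exp_neg_mul (by simp; linarith) hε) ?_).2.differentiableAt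
      |>.differentiableWithinAt
  · filter_upwards [self_mem_ae_restrict measurableSet_Ioi] with t ht z hz
    rw [norm_neg, norm_cpow_mul_cexp_neg_mul _ _ ht]
    have := ht.out
    gcongr
  · filter_upwards [self_mem_ae_restrict measurableSet_Ioi] with t ht z _
    exact hasDerivAt_cpow_mul_cexp_neg_mul a z ht

lemma integral_cpow_mul_cexp_neg_mul_Ioi {a z : ℂ} (ha : 0 < a.re) (hz : 0 < z.re) :
    ∫ t in Set.Ioi (0 : ℝ), (t : ℂ) ^ (a - 1) * cexp (-(z * t)) =
      Complex.Gamma a / z ^ a := by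
  have hU : IsOpen {z : ℂ | 0 < z.re} := isOpen_lt continuous_const continuous_re
  have hlhs := (differentiableOn_integral_cpow_mul_cexp_neg_mul ha).analyticOnNhd hU
  have hrhs : AnalyticOnNhd ℂ (fun z : ℂ => Complex.Gamma a / z ^ a) {z | 0 < z.re} := by
    refine DifferentiableOn.analyticOnNhd (fun z hz => ?_) hU
    have hz0 : z ≠ 0 := fun h => by simp [h] at hz
    exact ((differentiableAt_const _).div (differentiableAt_id.cpow_const (Or.inl hz))
      (cpow_ne_zero_iff.2 (Or.inl hz0))).differentiableWithinAt
  have hreal : ∀ r : ℝ, 0 < r →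
      ∫ t in Set.Ioi (0 : ℝ), (t : ℂ) ^ (a - 1) * cexp (-(r * t)) =
        Complex.Gamma a / r ^ a := by
    intro r hr
    have harg : (r : ℂ).arg ≠ π := by
      rw [arg_ofReal_of_nonneg hr.le]; exact pi_pos.ne
    rw [Complex.integral_cpow_mul_exp_neg_mul_Ioi ha hr, one_div, inv_cpow _ _ harg,
      div_eq_mul_inv, mul_comm]
  have hofReal : Filter.Tendsto ((↑) : ℝ → ℂ) (nhdsWithin 1 {1}ᶜ) (nhdsWithin 1 {1}ᶜ) :=
    tendsto_nhdsWithin_of_tendsto_nhds_of_eventually_within _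
      (continuous_ofReal.tendsto' 1 1 ofReal_one |>.mono_left nhdsWithin_le_nhds)
      (eventually_nhdsWithin_of_forall fun x hx => by simpa using hx)
  refine hlhs.eqOn_of_preconnected_of_frequently_eq hrhs
    (convex_halfSpace_re_gt 0).isPreconnected (by simp : (1 : ℂ) ∈ {z : ℂ | 0 < z.re})
    (hofReal.frequently ?_) hz
  refine Filter.Eventually.frequently ?_
  filter_upwards [nhdsWithin_le_nhds (lt_mem_nhds one_pos)] with r hr using hreal r hr

lemma Complex.exp_cpow {x : ℂ} (h₁ : -π < x.im) (h₂ : x.im ≤ π) (y : ℂ) :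
    cexp x ^ y = cexp (x * y) := by
  rw [cpow_def_of_ne_zero (exp_ne_zero x), log_exp h₁ h₂]

lemma re_cexp_mul_cpow_mul_cexp (θ β φ : ℝ) {t : ℝ} (ht : 0 < t) :
    (cexp (-(φ * I)) * ((t : ℂ) ^ ((β : ℂ) - 1) * cexp (-(cexp (θ * I) * t)))).re =
      t ^ (β - 1) * Real.exp (-t * Real.cos θ) * Real.cos (t * Real.sin θ + φ) := by
  have hexp : -(φ * I) + -(cexp (θ * I) * t) =
      ((-t * Real.cos θ : ℝ) : ℂ) + ((-(t * Real.sin θ + φ) : ℝ) : ℂ) * I := by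
    rw [exp_mul_I]; push_cast; ring
  have hsplit : cexp (-(φ * I)) * ((t : ℂ) ^ ((β : ℂ) - 1) * cexp (-(cexp (θ * I) * t))) =
      ((t ^ (β - 1) * Real.exp (-t * Real.cos θ) : ℝ) : ℂ) *
        cexp ((-(t * Real.sin θ + φ) : ℝ) * I) := by
    rw [mul_left_comm, ← Complex.exp_add, hexp, Complex.exp_add, ← ofReal_exp,
      ← ofReal_one, ← ofReal_sub, ← ofReal_cpow ht.le]
    push_cast; ring
  rw [hsplit, re_ofReal_mul, exp_ofReal_mul_I_re, Real.cos_neg]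

end LaplaceCpow

theorem stmt_6 (θ β φ : ℝ) (hθ : θ ∈ Set.Ioo (-(π / 2)) (π / 2)) (hβ : 0 < β) :
    IntegrableOn (fun x : ℝ => x ^ (β - 1) * Real.exp (-x * Real.cos θ) *
      Real.cos (x * Real.sin θ + φ)) (Set.Ioi 0) ∧
    ∫ x in Set.Ioi (0 : ℝ), x ^ (β - 1) * Real.exp (-x * Real.cos θ) *
      Real.cos (x * Real.sin θ + φ) = Real.Gamma β * Real.cos (β * θ + φ) := by
  set z := Complex.exp (θ * Complex.I)
  have hz : 0 < z.re := by
    rw [Complex.exp_ofReal_mul_I_re]; exact Real.cos_pos_of_mem_Ioo hθ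
  set g : ℝ → ℂ := fun t =>
    Complex.exp (-(φ * Complex.I)) * ((t : ℂ) ^ ((β : ℂ) - 1) * Complex.exp (-(z * t)))
  have hg : IntegrableOn g (Set.Ioi 0) :=
    (integrableOn_cpow_mul_cexp_neg_mul (by simpa using hβ) hz).const_mul _
  have hre : Set.EqOn (fun t => (g t).re)
      (fun x : ℝ => x ^ (β - 1) * Real.exp (-x * Real.cos θ) * Real.cos (x * Real.sin θ + φ))
      (Set.Ioi 0) := fun t ht => re_cexp_mul_cpow_mul_cexp θ β φ ht
  refine ⟨IntegrableOn.congr_fun hg.re hre measurableSet_Ioi, ?_⟩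
  have hzβ : z ^ (β : ℂ) = Complex.exp ((β * θ : ℝ) * Complex.I) := by
    rw [Complex.exp_cpow (by simp; linarith [hθ.1, pi_pos]) (by simp; linarith [hθ.2, pi_pos])]
    push_cast; ring_nf
  calc _ = (∫ t in Set.Ioi (0 : ℝ), g t).re := by
        rw [← setIntegral_congr_fun measurableSet_Ioi hre]; exact integral_re hg
    _ = ((Real.Gamma β : ℂ) * Complex.exp ((-(β * θ + φ) : ℝ) * Complex.I)).re := by
        rw [integral_const_mul, integral_cpow_mul_cexp_neg_mul_Ioi (by simpa using hβ) hz, hzβ,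
          Complex.Gamma_ofReal, div_eq_mul_inv, ← Complex.exp_neg, mul_left_comm,
          ← Complex.exp_add]
        push_cast; ring_nf
    _ = _ := by rw [Complex.re_ofReal_mul, Complex.exp_ofReal_mul_I_re, Real.cos_neg]
end

section
/- Let β ∈ (0, 1), λ > 0 and c ∈ ℝ. Then the improper integral ∫₀^∞ x^{β-1} sin(c + λx) dx converges, in the sense that lim_{T→∞} ∫₀^T x^{β-1} sin(c + λx) dx exists, and its value equals Γ(β) λ^{-β} sin(c + πβ/2). -/
open MeasureTheory Real Filter
open Set Topology

/-!
Since `x ^ (β - 1) = Γ(1 - β)⁻¹ ∫₀^∞ t ^ (-β) e^{-xt} dt`, Fubini turns the integral over `(0, T)`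
into `Γ(1 - β)⁻¹ ∫₀^∞ t ^ (-β) L_T(t) dt`, where `L_T(t) = ∫₀^T e^{-xt} sin (c + λx) dx` is
elementary. As `T → ∞`, `L_T(t) → (t sin c + λ cos c) / (t² + λ²)` with a bound integrable against
`t ^ (-β)`, so dominated convergence applies. The limit is evaluated through
`∫₀^∞ t ^ (s - 1) / (t² + λ²) dt = λ ^ (s - 2) π / (2 sin (π s / 2))`, obtained by writing
`1 / (t² + λ²) = ∫₀^∞ e^{-(t² + λ²) y} dy` and using Fubini once more, and the reflection formula
`Γ(s) Γ(1 - s) = π / sin (π s)`.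
-/

section Kernel

variable {s lam : ℝ}

lemma integral_exp_neg_mul_Ioi_zero {a : ℝ} (ha : 0 < a) :
    ∫ y in Ioi (0:ℝ), exp (-a * y) = a⁻¹ := by
  simpa [neg_div, div_neg] using integral_exp_mul_Ioi (neg_lt_zero.mpr ha) 0

lemma integral_rpow_mul_exp_neg_mul_sq_Ioi (hs : 0 < s) {y : ℝ} (hy : 0 < y) :
    ∫ t in Ioi (0:ℝ), t ^ (s - 1) * exp (-y * t ^ 2) = Gamma (s / 2) / 2 * y ^ (-(s / 2)) := by
  have := integral_rpow_mul_exp_neg_mul_rpow two_pos (q := s - 1) (by linarith) hy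
  simp only [rpow_two] at this
  rw [this, show -(s - 1 + 1) / 2 = -(s / 2) by ring, show (s - 1 + 1) / 2 = s / 2 by ring]
  ring

lemma rpow_mul_exp_neg_sq_add_sq_mul_eq (t y : ℝ) :
    t ^ (s - 1) * exp (-(t ^ 2 + lam ^ 2) * y)
      = exp (-(lam ^ 2 * y)) * (t ^ (s - 1) * exp (-y * t ^ 2)) := by
  rw [mul_left_comm, ← exp_add]; ring_nf

lemma integrable_prod_rpow_mul_exp_neg_sq_add_sq_mul (hs0 : 0 < s) (hs2 : s < 2)
    (hlam : 0 < lam) :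
    Integrable (Function.uncurry fun y t : ℝ => t ^ (s - 1) * exp (-(t ^ 2 + lam ^ 2) * y))
      ((volume.restrict (Ioi 0)).prod (volume.restrict (Ioi 0))) := by
  rw [integrable_prod_iff (by apply Measurable.aestronglyMeasurable; fun_prop)]
  constructor
  · filter_upwards [ae_restrict_mem measurableSet_Ioi] with y (hy : 0 < y)
    simp only [Function.uncurry_apply_pair, rpow_mul_exp_neg_sq_add_sq_mul_eq]
    exact (integrableOn_rpow_mul_exp_neg_mul_sq hy (by linarith)).const_mul _
  · have : IntegrableOn
        (fun y : ℝ => Gamma (s / 2) / 2 * (y ^ (-(s / 2)) * exp (-lam ^ 2 * y ^ (1:ℝ)))) (Ioi 0) :=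
      (integrableOn_rpow_mul_exp_neg_mul_rpow (p := 1) (by linarith : -1 < -(s / 2)) one_pos
        (pow_pos hlam 2)).const_mul (Gamma (s / 2) / 2)
    refine this.congr_fun (fun y (hy : 0 < y) => ?_) measurableSet_Ioi
    simp only [Function.uncurry_apply_pair]
    rw [setIntegral_congr_fun measurableSet_Ioi
      (g := fun t => t ^ (s - 1) * exp (-(t ^ 2 + lam ^ 2) * y))
      (fun t (ht : 0 < t) => norm_of_nonneg (by positivity))]
    simp only [rpow_mul_exp_neg_sq_add_sq_mul_eq, integral_const_mul,
      integral_rpow_mul_exp_neg_mul_sq_Ioi hs0 hy, rpow_one]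
    ring_nf

lemma integrableOn_rpow_div_sq_add_sq (hs0 : 0 < s) (hs2 : s < 2) (hlam : 0 < lam) :
    IntegrableOn (fun t => t ^ (s - 1) / (t ^ 2 + lam ^ 2)) (Ioi 0) := by
  refine (integrable_prod_rpow_mul_exp_neg_sq_add_sq_mul hs0 hs2 hlam).integral_prod_right.congr ?_
  filter_upwards with t
  simp only [Function.uncurry_apply_pair, integral_const_mul,
    integral_exp_neg_mul_Ioi_zero (by positivity : 0 < t ^ 2 + lam ^ 2), div_eq_mul_inv]

lemma integral_rpow_div_sq_add_sq (hs0 : 0 < s) (hs2 : s < 2) (hlam : 0 < lam) :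
    ∫ t in Ioi (0:ℝ), t ^ (s - 1) / (t ^ 2 + lam ^ 2)
      = lam ^ (s - 2) * π / (2 * sin (π * s / 2)) := by
  have hswap :=
    integral_integral_swap (integrable_prod_rpow_mul_exp_neg_sq_add_sq_mul hs0 hs2 hlam)
  calc ∫ t in Ioi (0:ℝ), t ^ (s - 1) / (t ^ 2 + lam ^ 2)
      = ∫ t in Ioi (0:ℝ), ∫ y in Ioi (0:ℝ), t ^ (s - 1) * exp (-(t ^ 2 + lam ^ 2) * y) := by
        congr 1 with t
        rw [integral_const_mul, integral_exp_neg_mul_Ioi_zero (by positivity), div_eq_mul_inv]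
    _ = ∫ y in Ioi (0:ℝ), Gamma (s / 2) / 2 * (y ^ (-(s / 2)) * exp (-(lam ^ 2 * y))) := by
        rw [← hswap]
        refine setIntegral_congr_fun measurableSet_Ioi fun y (hy : 0 < y) => ?_
        simp only [rpow_mul_exp_neg_sq_add_sq_mul_eq, integral_const_mul,
          integral_rpow_mul_exp_neg_mul_sq_Ioi hs0 hy]
        ring
    _ = Gamma (s / 2) / 2 * (Gamma (1 - s / 2) * lam ^ (s - 2)) := by
        have h := integral_rpow_mul_exp_neg_mul_Ioi (a := 1 - s / 2) (by linarith) (pow_pos hlam 2)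
        have hpow : (1 / lam ^ 2) ^ (1 - s / 2) = lam ^ (s - 2) := by
          rw [one_div, inv_rpow (by positivity), ← rpow_neg (by positivity), ← rpow_natCast,
            ← rpow_mul hlam.le]
          ring_nf
        rw [sub_sub_cancel_left, hpow] at h
        rw [integral_const_mul, h, mul_comm (lam ^ _)]
    _ = lam ^ (s - 2) * π / (2 * sin (π * s / 2)) := by
        rw [← mul_assoc, div_mul_eq_mul_div, Gamma_mul_Gamma_one_sub, mul_div_assoc']
        field_simp

end Kernel

section Laplace

variable {β : ℝ}

lemma integrableOn_rpow_neg_mul_exp_neg_mul (hβ : β < 1) {x : ℝ} (hx : 0 < x) :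
    IntegrableOn (fun t : ℝ => t ^ (-β) * exp (-(x * t))) (Ioi 0) := by
  simpa using integrableOn_rpow_mul_exp_neg_mul_rpow (p := 1) (by linarith : -1 < -β) one_pos hx

lemma integral_rpow_neg_mul_exp_neg_mul (hβ : β < 1) {x : ℝ} (hx : 0 < x) :
    ∫ t in Ioi (0:ℝ), t ^ (-β) * exp (-(x * t)) = Gamma (1 - β) * x ^ (β - 1) := by
  have h := integral_rpow_mul_exp_neg_mul_Ioi (a := 1 - β) (by linarith) hx
  rw [sub_sub_cancel_left, one_div, inv_rpow hx.le, ← rpow_neg hx.le, neg_sub] at h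
  rw [h, mul_comm]

lemma setIntegral_rpow_mul_eq_integral_laplace (hβ : β < 1) {s : Set ℝ} (hs : MeasurableSet s)
    (hs0 : s ⊆ Ioi 0) {g : ℝ → ℝ} (hg : Measurable g)
    (hint : IntegrableOn (fun x => x ^ (β - 1) * g x) s) :
    ∫ x in s, x ^ (β - 1) * g x
      = (Gamma (1 - β))⁻¹ * ∫ t in Ioi (0:ℝ), t ^ (-β) * ∫ x in s, exp (-(x * t)) * g x := by
  set G : ℝ → ℝ → ℝ := fun x t => t ^ (-β) * exp (-(x * t)) * g x
  have hGx : ∀ x ∈ s, ∫ t in Ioi (0:ℝ), G x t = Gamma (1 - β) * (x ^ (β - 1) * g x) := by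
    intro x hx
    rw [integral_mul_const, integral_rpow_neg_mul_exp_neg_mul hβ (hs0 hx), mul_assoc]
  have hG :
      Integrable (Function.uncurry G) ((volume.restrict s).prod (volume.restrict (Ioi 0))) := by
    rw [integrable_prod_iff (by apply Measurable.aestronglyMeasurable; fun_prop)]
    constructor
    · filter_upwards [ae_restrict_mem hs] with x hx
      exact (integrableOn_rpow_neg_mul_exp_neg_mul hβ (hs0 hx)).mul_const (g x)
    · refine (hint.norm.const_mul (Gamma (1 - β))).congr ?_
      filter_upwards [ae_restrict_mem hs] with x hx
      have hx0 : 0 < x := hs0 hx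
      simp only [Function.uncurry_apply_pair, G, norm_mul, norm_of_nonneg (exp_pos _).le]
      rw [setIntegral_congr_fun measurableSet_Ioi fun t (ht : 0 < t) => by
        rw [norm_of_nonneg (rpow_nonneg ht.le _)], integral_mul_const,
        integral_rpow_neg_mul_exp_neg_mul hβ hx0, norm_of_nonneg (rpow_nonneg hx0.le _)]
      ring
  rw [eq_inv_mul_iff_mul_eq₀ (Gamma_pos_of_pos (by linarith)).ne', ← integral_const_mul,
    ← setIntegral_congr_fun hs hGx, integral_integral_swap hG]
  refine setIntegral_congr_fun measurableSet_Ioi fun t _ => ?_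
  simp only [G, ← integral_const_mul, mul_assoc]

end Laplace

lemma integral_exp_neg_mul_mul_sin {t lam : ℝ} (h : t ^ 2 + lam ^ 2 ≠ 0) (c T : ℝ) :
    ∫ x in (0:ℝ)..T, exp (-(x * t)) * sin (c + lam * x)
      = (t * sin c + lam * cos c
          - exp (-(T * t)) * (t * sin (c + lam * T) + lam * cos (c + lam * T)))
        / (t ^ 2 + lam ^ 2) := by
  have hderiv : ∀ x, HasDerivAt
      (fun x => -(exp (-(x * t)) * (t * sin (c + lam * x) + lam * cos (c + lam * x)))
        / (t ^ 2 + lam ^ 2))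
      (exp (-(x * t)) * sin (c + lam * x)) x := fun x => by
    have hlin : HasDerivAt (fun x => c + lam * x) lam x := by
      simpa using ((hasDerivAt_id x).const_mul lam).const_add c
    have hexp : HasDerivAt (fun x => -(x * t)) (-t) x := (hasDerivAt_mul_const t).neg
    refine (((hexp.exp.mul ((hlin.sin.const_mul t).add (hlin.cos.const_mul lam))).neg).div_const
      _).congr_deriv ?_
    simp only [Pi.add_apply]
    field_simp
    ring
  rw [intervalIntegral.integral_eq_sub_of_hasDerivAt (fun x _ => hderiv x)
    (by apply Continuous.intervalIntegrable; fun_prop)]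
  simp only [zero_mul, neg_zero, exp_zero, mul_zero, add_zero, one_mul]
  ring

lemma abs_mul_sin_add_mul_cos_le (a b θ : ℝ) : |a * sin θ + b * cos θ| ≤ |a| + |b| := by
  calc |a * sin θ + b * cos θ| ≤ |a| * |sin θ| + |b| * |cos θ| := by
        simpa only [abs_mul] using abs_add_le (a * sin θ) (b * cos θ)
    _ ≤ |a| * 1 + |b| * 1 := by gcongr <;> [exact abs_sin_le_one θ; exact abs_cos_le_one θ]
    _ = |a| + |b| := by ring

section Limit

variable {β lam : ℝ}

lemma rpow_neg_mul_div_sq_add_sq_eq {t : ℝ} (ht : 0 < t) (a b : ℝ) :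
    t ^ (-β) * ((t * a + b) / (t ^ 2 + lam ^ 2))
      = a * (t ^ ((2 - β) - 1) / (t ^ 2 + lam ^ 2))
        + b * (t ^ ((1 - β) - 1) / (t ^ 2 + lam ^ 2)) := by
  rw [show (2 - β) - 1 = 1 + -β by ring, show (1 - β) - 1 = -β by ring, rpow_add ht, rpow_one]
  ring

lemma integrableOn_rpow_neg_mul_div_sq_add_sq (h0 : 0 < β) (h1 : β < 1) (hlam : 0 < lam)
    (a b : ℝ) : IntegrableOn (fun t => t ^ (-β) * ((t * a + b) / (t ^ 2 + lam ^ 2))) (Ioi 0) := by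
  refine IntegrableOn.congr_fun
    (((integrableOn_rpow_div_sq_add_sq (s := 2 - β) (by linarith) (by linarith) hlam).const_mul
      a).add
      ((integrableOn_rpow_div_sq_add_sq (s := 1 - β) (by linarith) (by linarith) hlam).const_mul
        b))
    (fun t (ht : 0 < t) => (rpow_neg_mul_div_sq_add_sq_eq ht a b).symm) measurableSet_Ioi

lemma integral_rpow_neg_mul_sin_cos_div_sq_add_sq (h0 : 0 < β) (h1 : β < 1) (hlam : 0 < lam)
    (c : ℝ) :
    ∫ t in Ioi (0:ℝ), t ^ (-β) * ((t * sin c + lam * cos c) / (t ^ 2 + lam ^ 2))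
      = Gamma β * Gamma (1 - β) * lam ^ (-β) * sin (c + π * β / 2) := by
  rw [setIntegral_congr_fun measurableSet_Ioi fun t (ht : 0 < t) =>
      rpow_neg_mul_div_sq_add_sq_eq ht _ _,
    integral_add ((integrableOn_rpow_div_sq_add_sq (by linarith) (by linarith) hlam).const_mul _)
      ((integrableOn_rpow_div_sq_add_sq (by linarith) (by linarith) hlam).const_mul _),
    integral_const_mul, integral_const_mul,
    integral_rpow_div_sq_add_sq (by linarith) (by linarith) hlam,
    integral_rpow_div_sq_add_sq (by linarith) (by linarith) hlam, Gamma_mul_Gamma_one_sub]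
  set θ := π * β / 2
  have hsin : sin (π * (2 - β) / 2) = sin θ := by
    rw [show π * (2 - β) / 2 = π - θ by ring, sin_pi_sub]
  have hcos : sin (π * (1 - β) / 2) = cos θ := by
    rw [show π * (1 - β) / 2 = π / 2 - θ by ring, sin_pi_div_two_sub]
  have hsin2 : sin (π * β) = 2 * sin θ * cos θ := by
    rw [show π * β = 2 * θ by ring, sin_two_mul]
  have hpow : lam * lam ^ ((1 - β) - 2) = lam ^ (-β) := by
    rw [show (1 - β) - 2 = -β - 1 by ring, rpow_sub_one hlam.ne']
    field_simp
  have hθ : θ ∈ Ioo 0 (π / 2) := by constructor <;> simp only [θ] <;> nlinarith [pi_pos]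
  have hsinθ : 0 < sin θ := sin_pos_of_pos_of_lt_pi hθ.1 (by linarith [hθ.2, pi_pos])
  have hcosθ : 0 < cos θ := cos_pos_of_mem_Ioo ⟨by linarith [hθ.1, pi_pos], hθ.2⟩
  rw [hsin, hcos, hsin2, sin_add, show (2 - β) - 2 = -β by ring, ← hpow]
  field_simp

lemma tendsto_integral_rpow_neg_mul_laplace_sin (h0 : 0 < β) (h1 : β < 1) (hlam : 0 < lam)
    (c : ℝ) :
    Tendsto
      (fun T => ∫ t in Ioi (0:ℝ), t ^ (-β) * ∫ x in (0:ℝ)..T, exp (-(x * t)) * sin (c + lam * x))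
      atTop (𝓝 (∫ t in Ioi (0:ℝ), t ^ (-β) * ((t * sin c + lam * cos c) / (t ^ 2 + lam ^ 2)))) := by
  have hD : ∀ t : ℝ, 0 < t ^ 2 + lam ^ 2 := fun t => by positivity
  simp_rw [integral_exp_neg_mul_mul_sin (hD _).ne']
  refine tendsto_integral_filter_of_dominated_convergence
    (fun t => t ^ (-β) * ((t * 2 + 2 * lam) / (t ^ 2 + lam ^ 2)))
    (.of_forall fun T => by apply Measurable.aestronglyMeasurable; fun_prop) ?_
    (integrableOn_rpow_neg_mul_div_sq_add_sq h0 h1 hlam 2 (2 * lam)) ?_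
  · filter_upwards [eventually_ge_atTop 0] with T hT
    filter_upwards [ae_restrict_mem measurableSet_Ioi] with t (ht : 0 < t)
    have hexp : |exp (-(T * t))| ≤ 1 := by
      rw [abs_of_pos (exp_pos _), exp_le_one_iff, neg_nonpos]; positivity
    rw [norm_mul, norm_div, norm_of_nonneg (rpow_nonneg ht.le _), norm_of_nonneg (hD t).le]
    gcongr
    calc _ ≤ |t * sin c + lam * cos c|
          + |exp (-(T * t))| * |t * sin (c + lam * T) + lam * cos (c + lam * T)| := by
          rw [← abs_mul]; exact abs_sub _ _
      _ ≤ (|t| + |lam|) + 1 * (|t| + |lam|) := by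
          gcongr
          exacts [abs_mul_sin_add_mul_cos_le _ _ _, abs_mul_sin_add_mul_cos_le _ _ _]
      _ = t * 2 + 2 * lam := by rw [abs_of_pos ht, abs_of_pos hlam]; ring
  · filter_upwards [ae_restrict_mem measurableSet_Ioi] with t (ht : 0 < t)
    have hdecay : Tendsto
        (fun T => exp (-(T * t)) * (t * sin (c + lam * T) + lam * cos (c + lam * T)))
        atTop (𝓝 0) := by
      have hexp : Tendsto (fun T => exp (-(T * t)) * (t + lam)) atTop (𝓝 0) := by
        simpa using (tendsto_exp_neg_atTop_nhds_zero.comp (tendsto_id.atTop_mul_const ht)).mul_const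
          (t + lam)
      refine squeeze_zero_norm (fun T => ?_) hexp
      rw [norm_mul, norm_of_nonneg (exp_pos _).le]
      gcongr
      simpa [abs_of_pos ht, abs_of_pos hlam] using abs_mul_sin_add_mul_cos_le t lam (c + lam * T)
    simpa using ((tendsto_const_nhds.sub hdecay).div_const (t ^ 2 + lam ^ 2)).const_mul (t ^ (-β))

end Limit

lemma intervalIntegrable_rpow_mul_sin {β : ℝ} (hβ : 0 < β) (c lam a b : ℝ) :
    IntervalIntegrable (fun x => x ^ (β - 1) * sin (c + lam * x)) volume a b := by
  refine (intervalIntegral.intervalIntegrable_rpow' (r := β - 1) (by linarith)).mono_fun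
    (by apply Measurable.aestronglyMeasurable; fun_prop) (.of_forall fun x => ?_)
  simp only [norm_mul]
  exact mul_le_of_le_one_right (norm_nonneg _) (abs_sin_le_one _)

theorem stmt_7 (β lam c : ℝ) (hβ : β ∈ Set.Ioo (0 : ℝ) 1) (hlam : 0 < lam) :
    (∀ T > (0 : ℝ), IntervalIntegrable
      (fun x : ℝ => x ^ (β - 1) * Real.sin (c + lam * x)) volume 0 T) ∧
    Tendsto (fun T : ℝ => ∫ x in (0 : ℝ)..T, x ^ (β - 1) * Real.sin (c + lam * x))
      atTop (nhds (Real.Gamma β * lam ^ (-β) * Real.sin (c + π * β / 2))) := by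
  obtain ⟨h0, h1⟩ := hβ
  refine ⟨fun T _ => intervalIntegrable_rpow_mul_sin h0 c lam 0 T, ?_⟩
  have hlim :=
    (tendsto_integral_rpow_neg_mul_laplace_sin h0 h1 hlam c).const_mul (Gamma (1 - β))⁻¹
  rw [integral_rpow_neg_mul_sin_cos_div_sq_add_sq h0 h1 hlam,
    show (Gamma (1 - β))⁻¹ * (Gamma β * Gamma (1 - β) * lam ^ (-β) * sin (c + π * β / 2))
      = Gamma β * lam ^ (-β) * sin (c + π * β / 2) by
    field_simp [(Gamma_pos_of_pos (sub_pos.mpr h1)).ne']] at hlim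
  refine hlim.congr' ?_
  filter_upwards [eventually_ge_atTop 0] with T hT
  simp_rw [intervalIntegral.integral_of_le hT]
  exact (setIntegral_rpow_mul_eq_integral_laplace h1 measurableSet_Ioc (fun x hx => hx.1)
    (by fun_prop) ((intervalIntegrable_rpow_mul_sin h0 c lam 0 T).1)).symm
end

section
/- Let θ ∈ (0, π/2), a > 0 and φ ∈ ℝ, and for ξ ≥ 0 set K(ξ) = ∫₀^∞ z^{a-1} e^{-cos θ (ξ/z + z)} cos((ξ/z) sin θ + φ) sin(z sin θ) dz. Then K is differentiable on (0, ∞) (with derivative obtained by differentiating under the integral sign) and |K′(ξ)| ≤ 2 sin θ · (cos θ)^{-a} · Γ(a) for every ξ > 0. -/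
/-!
Differentiation under the integral sign is justified by a single dominating function: for
`z > 0` and `ζ ≥ 0` the `ζ`-derivative of the integrand is bounded by
`2 sin θ · z^(a-1) e^(-z cos θ)`, because `e^(-cos θ · ζ/z) ≤ 1`, the bracket is at most
`2/z`, and `|sin (z sin θ)| ≤ z sin θ` cancels that `1/z`. Integrating this bound with the Gamma
integral `∫₀^∞ z^(a-1) e^(-cz) dz = c^(-a) Γ(a)` gives the estimate on `K'`.
-/

open MeasureTheory Real

noncomputable section

namespace KernelIntegral

variable (θ a φ : ℝ)

def kernel (ζ z : ℝ) : ℝ :=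
  z ^ (a - 1) * exp (-cos θ * (ζ / z + z)) * cos (ζ / z * sin θ + φ) * sin (z * sin θ)

def kernelDeriv (ζ z : ℝ) : ℝ :=
  z ^ (a - 1) * exp (-cos θ * (ζ / z + z)) *
    (-(cos θ / z) * cos (ζ / z * sin θ + φ) - sin θ / z * sin (ζ / z * sin θ + φ)) *
    sin (z * sin θ)

def gammaWeight (c z : ℝ) : ℝ := z ^ (a - 1) * exp (-(c * z))

theorem hasDerivAt_kernel (ζ z : ℝ) :
    HasDerivAt (fun ζ => kernel θ a φ ζ z) (kernelDeriv θ a φ ζ z) ζ := by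
  have hexp : HasDerivAt (fun ζ : ℝ => -cos θ * (ζ / z + z)) (-cos θ * (1 / z)) ζ :=
    (((hasDerivAt_id ζ).div_const z).add_const z).const_mul _
  have hcos : HasDerivAt (fun ζ : ℝ => ζ / z * sin θ + φ) (1 / z * sin θ) ζ :=
    (((hasDerivAt_id ζ).div_const z).mul_const _).add_const φ
  refine (((hexp.exp.const_mul (z ^ (a - 1))).mul hcos.cos).mul_const
    (sin (z * sin θ))).congr_deriv ?_
  rw [kernelDeriv]
  ring

theorem measurable_kernel (ζ : ℝ) : Measurable (kernel θ a φ ζ) := by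
  unfold kernel; fun_prop

theorem measurable_kernelDeriv (ζ : ℝ) : Measurable (kernelDeriv θ a φ ζ) := by
  unfold kernelDeriv; fun_prop

theorem neg_mul_div_add_le_neg_mul {c ζ z : ℝ} (hc : 0 ≤ c) (hζ : 0 ≤ ζ) (hz : 0 < z) :
    -c * (ζ / z + z) ≤ -(c * z) := by
  have : 0 ≤ c * (ζ / z) := by positivity
  linarith

variable {θ a}

theorem abs_kernel_le (hc : 0 ≤ cos θ) {ζ z : ℝ} (hζ : 0 ≤ ζ) (hz : 0 < z) :
    |kernel θ a φ ζ z| ≤ gammaWeight a (cos θ) z := by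
  simp only [kernel, gammaWeight, abs_mul, abs_of_pos (rpow_pos_of_pos hz _), abs_exp]
  calc z ^ (a - 1) * exp (-cos θ * (ζ / z + z)) * |cos (ζ / z * sin θ + φ)| * |_|
      ≤ z ^ (a - 1) * exp (-(cos θ * z)) * 1 * 1 := by
        gcongr
        exacts [neg_mul_div_add_le_neg_mul hc hζ hz, abs_cos_le_one _, abs_sin_le_one _]
    _ = z ^ (a - 1) * exp (-(cos θ * z)) := by ring

theorem abs_kernelDeriv_le (hc : 0 ≤ cos θ) (hs : 0 ≤ sin θ) {ζ z : ℝ} (hζ : 0 ≤ ζ)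
    (hz : 0 < z) : |kernelDeriv θ a φ ζ z| ≤ 2 * sin θ * gammaWeight a (cos θ) z := by
  have hbracket (x : ℝ) : |-(cos θ / z) * cos x - sin θ / z * sin x| ≤ 2 / z := by
    calc _ ≤ |cos θ / z| * |cos x| + |sin θ / z| * |sin x| := by
          rw [← abs_neg (cos θ / z), ← abs_mul, ← abs_mul]
          exact abs_sub _ _
      _ ≤ 1 / z * 1 + 1 / z * 1 := by
          simp only [abs_div, abs_of_pos hz]
          gcongr
          exacts [abs_cos_le_one _, abs_cos_le_one _, abs_sin_le_one _, abs_sin_le_one _]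
      _ = 2 / z := by ring
  have hsin : |sin (z * sin θ)| ≤ z * sin θ :=
    abs_sin_le_abs.trans (abs_of_nonneg (by positivity : (0 : ℝ) ≤ z * sin θ)).le
  simp only [kernelDeriv, gammaWeight, abs_mul, abs_of_pos (rpow_pos_of_pos hz _), abs_exp]
  calc z ^ (a - 1) * exp (-cos θ * (ζ / z + z)) * |_| * |sin (z * sin θ)|
      ≤ z ^ (a - 1) * exp (-(cos θ * z)) * (2 / z) * (z * sin θ) := by
        gcongr
        exacts [neg_mul_div_add_le_neg_mul hc hζ hz, hbracket _]
    _ = 2 * sin θ * (z ^ (a - 1) * exp (-(cos θ * z))) := by field_simp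

variable {c : ℝ}

theorem integral_gammaWeight (ha : 0 < a) (hc : 0 < c) :
    ∫ z in Set.Ioi 0, gammaWeight a c z = c ^ (-a) * Gamma a := by
  simp only [gammaWeight]
  rw [integral_rpow_mul_exp_neg_mul_Ioi ha hc, one_div, inv_rpow hc.le, rpow_neg hc.le]

theorem integrableOn_gammaWeight (ha : 0 < a) (hc : 0 < c) :
    IntegrableOn (gammaWeight a c) (Set.Ioi 0) :=
  .of_integral_ne_zero (by rw [integral_gammaWeight ha hc]; positivity [Gamma_pos_of_pos ha])

theorem hasDerivAt_integral_kernel (ha : 0 < a) (hc : 0 < cos θ) (hs : 0 ≤ sin θ) {ξ : ℝ}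
    (hξ : 0 < ξ) :
    HasDerivAt (fun ζ => ∫ z in Set.Ioi 0, kernel θ a φ ζ z)
      (∫ z in Set.Ioi 0, kernelDeriv θ a φ ξ z) ξ := by
  have hdom := (integrableOn_gammaWeight ha hc).const_mul (2 * sin θ)
  have hkernel : IntegrableOn (kernel θ a φ ξ) (Set.Ioi 0) :=
    (integrableOn_gammaWeight ha hc).mono' (measurable_kernel θ a φ ξ).aestronglyMeasurable <|
      (ae_restrict_iff' measurableSet_Ioi).2 <| .of_forall fun z hz =>
        abs_kernel_le φ hc.le hξ.le hz
  have hbound : ∀ᵐ z ∂volume.restrict (Set.Ioi 0), ∀ ζ ∈ Metric.ball ξ ξ,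
      ‖kernelDeriv θ a φ ζ z‖ ≤ 2 * sin θ * gammaWeight a (cos θ) z := by
    refine (ae_restrict_iff' measurableSet_Ioi).2 (.of_forall fun z hz ζ hζ => ?_)
    have := (abs_lt.1 (Real.dist_eq ζ ξ ▸ Metric.mem_ball.1 hζ)).1
    exact abs_kernelDeriv_le φ hc.le hs (by linarith) hz
  exact (hasDerivAt_integral_of_dominated_loc_of_deriv_le (Metric.ball_mem_nhds ξ hξ)
    (.of_forall fun ζ => (measurable_kernel θ a φ ζ).aestronglyMeasurable) hkernel
    (measurable_kernelDeriv θ a φ ξ).aestronglyMeasurable hbound hdom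
    (.of_forall fun z ζ _ => hasDerivAt_kernel θ a φ ζ z)).2

theorem abs_integral_kernelDeriv_le (ha : 0 < a) (hc : 0 < cos θ) (hs : 0 ≤ sin θ) {ξ : ℝ}
    (hξ : 0 ≤ ξ) :
    |∫ z in Set.Ioi 0, kernelDeriv θ a φ ξ z| ≤ 2 * sin θ * cos θ ^ (-a) * Gamma a := by
  rw [← norm_eq_abs]
  calc ‖∫ z in Set.Ioi 0, kernelDeriv θ a φ ξ z‖
      ≤ ∫ z in Set.Ioi 0, 2 * sin θ * gammaWeight a (cos θ) z :=
        norm_integral_le_of_norm_le ((integrableOn_gammaWeight ha hc).const_mul _) <|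
          (ae_restrict_iff' measurableSet_Ioi).2 <| .of_forall fun z hz =>
            abs_kernelDeriv_le φ hc.le hs hξ hz
    _ = 2 * sin θ * cos θ ^ (-a) * Gamma a := by
        rw [integral_const_mul, integral_gammaWeight ha hc]; ring

end KernelIntegral

end

open KernelIntegral in
theorem stmt_9 (θ a φ : ℝ) (hθ : θ ∈ Set.Ioo (0 : ℝ) (π / 2)) (ha : 0 < a) :
    ∀ ξ > (0 : ℝ),
      HasDerivAt (fun ζ : ℝ => ∫ z in Set.Ioi (0 : ℝ), z ^ (a - 1) *
          Real.exp (-Real.cos θ * (ζ / z + z)) * Real.cos (ζ / z * Real.sin θ + φ) *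
          Real.sin (z * Real.sin θ))
        (∫ z in Set.Ioi (0 : ℝ), z ^ (a - 1) * Real.exp (-Real.cos θ * (ξ / z + z)) *
          (-(Real.cos θ / z) * Real.cos (ξ / z * Real.sin θ + φ) -
            Real.sin θ / z * Real.sin (ξ / z * Real.sin θ + φ)) *
          Real.sin (z * Real.sin θ)) ξ ∧
      |∫ z in Set.Ioi (0 : ℝ), z ^ (a - 1) * Real.exp (-Real.cos θ * (ξ / z + z)) *
          (-(Real.cos θ / z) * Real.cos (ξ / z * Real.sin θ + φ) -
            Real.sin θ / z * Real.sin (ξ / z * Real.sin θ + φ)) *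
          Real.sin (z * Real.sin θ)| ≤
        2 * Real.sin θ * Real.cos θ ^ (-a) * Real.Gamma a := by
  obtain ⟨hθ0, hθπ⟩ := hθ
  have hc : 0 < cos θ := cos_pos_of_mem_Ioo ⟨by linarith [pi_pos], hθπ⟩
  have hs : 0 ≤ sin θ := sin_nonneg_of_nonneg_of_le_pi hθ0.le (by linarith [pi_pos])
  intro ξ hξ
  exact ⟨hasDerivAt_integral_kernel φ ha hc hs hξ, abs_integral_kernelDeriv_le φ ha hc hs hξ.le⟩
end
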